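/- arXiv:1202.2545 — 4 statements merged into one kernel-verified Lean document; each statement's English description precedes it below -/
import Mathlib

section
/- Fix an integer n ≥ 1 and q ∈ (−1,1]. For all f, g ∈ L²(ℝ₊ⁿ), one has Σ_{π∈C₂(n⊗n)} q^{Cr(π)} ∫_π f ⊗ g = ⟨f, g*⟩_q. -/
open MeasureTheory

noncomputable section

/-- Lebesgue measure restricted to `ℝ₊ = [0,∞)`. -/
def mR : Measure ℝ := volume.restrict (Set.Ici (0 : ℝ))

/-- Lebesgue measure on `ℝ₊ⁿ`. -/
def μn (n : ℕ) : Measure (Fin n → ℝ) := Measure.pi fun _ => mR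

/-- Number of inversions of a map `σ : Fin p → Fin m`:
`inv(σ) = Card {i < j : σ i > σ j}`. -/
def invCount {p m : ℕ} (σ : Fin p → Fin m) : ℕ :=
  (Finset.univ.filter fun ij : Fin p × Fin p => ij.1 < ij.2 ∧ σ ij.2 < σ ij.1).card

/-- The `q`-inner product
`⟨f,g⟩_q = Σ_{σ ∈ S_n} q^{inv σ} ∫ f(t_{σ(1)},…,t_{σ(n)}) g(t₁,…,t_n) dt`. -/
def qInner (n : ℕ) (q : ℝ) (f g : (Fin n → ℝ) → ℝ) : ℝ :=
  ∑ σ : Equiv.Perm (Fin n),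
    q ^ invCount (fun i => σ i) * ∫ t, f (fun i => t (σ i)) * g t ∂ μn n

/-- `f*`, the mirror of `f` : `f*(t₁,…,tₙ) = f(tₙ,…,t₁)`. -/
def mirror {n : ℕ} (f : (Fin n → ℝ) → ℝ) : (Fin n → ℝ) → ℝ := fun t => f fun i => t i.rev

/-- The pairing integral `∫_{P₂(σ)} F ⊗ H` associated with the pairing
`P₂(σ) = {{N+1-i, N+σ(i)} : 1 ≤ i ≤ N}` of `{1,…,2N}`, namely
`∫ F(s₁,…,s_N) H(s_{N+1-σ⁻¹(1)},…,s_{N+1-σ⁻¹(N)}) ds`. -/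
def P2Integral (N : ℕ) (σ : Equiv.Perm (Fin N)) (F H : (Fin N → ℝ) → ℝ) : ℝ :=
  ∫ s, F s * H (fun i => s (σ.symm i).rev) ∂ μn N

/-- `f` is symmetric: for every permutation `σ`, `f(t_{σ(1)},…,t_{σ(n)}) = f(t₁,…,tₙ)`
for almost every `t`. -/
def SymmFn {n : ℕ} (f : (Fin n → ℝ) → ℝ) : Prop :=
  ∀ σ : Equiv.Perm (Fin n), ∀ᵐ t ∂ μn n, f (fun i => t (σ i)) = f t

/-- Safe coordinate access: `gv t k = t k` when `k < m`, and `0` otherwise. -/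
def gv {m : ℕ} (t : Fin m → ℝ) (k : ℕ) : ℝ := if h : k < m then t ⟨k, h⟩ else 0

/-- The `p`-th contraction `f ⌢_p g`:
`(f ⌢_p g)(t₁,…,t_{n+m-2p}) = ∫ f(t₁,…,t_{n-p},s_p,…,s₁) g(s₁,…,s_p,t_{n-p+1},…,t_{n+m-2p}) ds`. -/
def contr (n m p : ℕ) (f : (Fin n → ℝ) → ℝ) (g : (Fin m → ℝ) → ℝ) :
    (Fin (n + m - 2 * p) → ℝ) → ℝ :=
  fun t => ∫ s : Fin p → ℝ,
      f (fun i => if (i : ℕ) < n - p then gv t i else gv s (n - 1 - (i : ℕ))) *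
      g (fun j => if (j : ℕ) < p then gv s j else gv t (n - p + ((j : ℕ) - p))) ∂ μn p

/-- `α(σ)` for a (strictly decreasing, 0-indexed) `σ : Fin p → Fin n`;
in 1-indexed terms `α(σ) = Σᵢ (n+1-σ(i)) - p(p+1)/2`. -/
def alphaA (n p : ℕ) (σ : Fin p → Fin n) : ℕ := (∑ i, (n - (σ i : ℕ))) - p * (p + 1) / 2

/-- `β(σ)` for an (injective, 0-indexed) `σ : Fin p → Fin n`;
in 1-indexed terms `β(σ) = Σᵢ σ(i) - p(p+1)/2 + inv(σ)`. -/
def betaB (n p : ℕ) (σ : Fin p → Fin n) : ℕ :=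
  ((∑ i, (σ i : ℕ)) - p * (p - 1) / 2) + invCount σ

/-- `f_q^{(p)}`, as a function of `(t₁,…,t_{n-p},s_p,…,s₁)`:
`Σ_{σ : {1,…,p} → {1,…,n} strictly decreasing} q^{α(σ)} f(x₁,…,xₙ)` where `x_{σ(i)} = s_i`
and the remaining coordinates, read increasingly, are `t₁,…,t_{n-p}`. -/
def qexpDec (n p : ℕ) (q : ℝ) (f : (Fin n → ℝ) → ℝ) : (Fin n → ℝ) → ℝ :=
  fun u => ∑ σ ∈ Finset.univ.filter (fun σ : Fin p → Fin n => ∀ i j : Fin p, i < j → σ j < σ i),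
    q ^ alphaA n p σ * f (fun j =>
      if ∃ i, σ i = j then
        ∑ i ∈ Finset.univ.filter (fun i => σ i = j), gv u (n - 1 - (i : ℕ))
      else gv u ((Finset.univ.filter fun j' : Fin n => j' < j ∧ ∀ i, σ i ≠ j').card))

/-- `f_q^{[p]}`, as a function of `(s₁,…,s_p,t₁,…,t_{n-p})`:
`Σ_{σ : {1,…,p} → {1,…,n} injective} q^{β(σ)} f(x₁,…,xₙ)` where `x_{σ(i)} = s_i`
and the remaining coordinates, read increasingly, are `t₁,…,t_{n-p}`. -/
def qexpInj (n p : ℕ) (q : ℝ) (f : (Fin n → ℝ) → ℝ) : (Fin n → ℝ) → ℝ :=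
  fun u => ∑ σ ∈ Finset.univ.filter (fun σ : Fin p → Fin n => Function.Injective σ),
    q ^ betaB n p σ * f (fun j =>
      if ∃ i, σ i = j then
        ∑ i ∈ Finset.univ.filter (fun i => σ i = j), gv u (i : ℕ)
      else gv u (p + (Finset.univ.filter fun j' : Fin n => j' < j ∧ ∀ i, σ i ≠ j').card))

/-- The `q`-contraction `f ⊗_q^p g := f_q^{(p)} ⌢_p g_q^{[p]}`. -/
def qcontr (n m p : ℕ) (q : ℝ) (f : (Fin n → ℝ) → ℝ) (g : (Fin m → ℝ) → ℝ) :
    (Fin (n + m - 2 * p) → ℝ) → ℝ :=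
  contr n m p (qexpDec n p q f) (qexpInj m p q g)

/-- Two (2-element) sets form a crossing: `{x₁,y₁}, {x₂,y₂}` with `x₁ < x₂ < y₁ < y₂`. -/
def Crossing (p₁ p₂ : Finset ℕ) : Prop :=
  ∃ x₁ ∈ p₁, ∃ y₁ ∈ p₁, ∃ x₂ ∈ p₂, ∃ y₂ ∈ p₂, x₁ < x₂ ∧ x₂ < y₁ ∧ y₁ < y₂

/-- The number of crossings `Cr(π)` of a pairing `π` (each crossing counted once:
the pair containing the smallest point is listed first). -/
def crNum (π : Finset (Finset ℕ)) : ℕ := by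
  classical exact ((π ×ˢ π).filter fun pp => Crossing pp.1 pp.2).card

/-- `π` is a pairing of `{0,…,N-1}`: a partition of it into 2-element sets. -/
def IsPairingOn (N : ℕ) (π : Finset (Finset ℕ)) : Prop :=
  (∀ pr ∈ π, pr.card = 2 ∧ pr ⊆ Finset.range N) ∧ ∀ x < N, ∃! pr, pr ∈ π ∧ x ∈ pr

/-- `off n i = n₁ + … + nᵢ`, the offset of the `(i+1)`-th block. -/
def off (n : ℕ → ℕ) (i : ℕ) : ℕ := ∑ j ∈ Finset.range i, n j

/-- `π ∈ C₂(n₁ ⊗ … ⊗ n_r)`: `π` is a pairing of the ground set partitioned into the `r`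
consecutive blocks of sizes `n 0, …, n (r-1)`, and every pair of `π` meets two distinct
blocks (no pair is contained in a single block). -/
def Respects (r : ℕ) (n : ℕ → ℕ) (π : Finset (Finset ℕ)) : Prop :=
  IsPairingOn (off n r) π ∧
    ∀ pr ∈ π, ¬ ∃ i < r, ∀ x ∈ pr, off n i ≤ x ∧ x < off n (i + 1)

/-- The (finite) set `C₂(n₁ ⊗ … ⊗ n_r)` of all respecting pairings. -/
def respPairings (r : ℕ) (n : ℕ → ℕ) : Finset (Finset (Finset ℕ)) := by
  classical exact ((Finset.range (off n r)).powerset.powerset).filter fun π => Respects r n π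

/-- The pairing integral `∫_π F`: one integration variable per pair of `π`, the two
coordinates of each pair being set equal to that variable, integrated over `ℝ₊^{N/2}`. -/
def pairingIntegral (π : Finset (Finset ℕ)) (F : (ℕ → ℝ) → ℝ) : ℝ :=
  ∫ u : {pr // pr ∈ π} → ℝ,
    F (fun x => ∑ pr ∈ Finset.univ.filter (fun pr : {pr // pr ∈ π} => x ∈ pr.1), u pr)
    ∂ Measure.pi fun _ => mR

/-- The product `f₁(t₁,…,t_{n₁}) f₂(t_{n₁+1},…,t_{n₁+n₂}) ⋯ f_r(…,t_n)` as a function of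
`t : ℕ → ℝ` (blocks of sizes `n 0, …, n (r-1)`). -/
def prodBlocks (r : ℕ) (n : ℕ → ℕ) (f : ∀ i, (Fin (n i) → ℝ) → ℝ) : (ℕ → ℝ) → ℝ :=
  fun t => ∏ i ∈ Finset.range r, f i (fun j => t (off n i + (j : ℕ)))

/-- `P₂(σ) = {{n+1-i, n+σ(i)} : 1 ≤ i ≤ n}` as a pairing of `{0,…,2n-1}` (0-indexed). -/
def P2set (n : ℕ) (σ : Equiv.Perm (Fin n)) : Finset (Finset ℕ) :=
  Finset.univ.image fun i : Fin n => ({n - 1 - (i : ℕ), n + ((σ i : Fin n) : ℕ)} : Finset ℕ)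

/-- The map `φ` in the construction of `F(σ₁,σ₂,π')`: the unpaired points of the first two
blocks are mapped increasingly onto `{0,…,n₀+n₁-2p-1}` and every later point `x` is mapped
to `x - 2p`. -/
def phiF (n₀ n₁ p : ℕ) (σ₁ : Fin p → Fin n₀) (σ₂ : Fin p → Fin n₁) (x : ℕ) : ℕ :=
  if x < n₀ + n₁ then
    ((Finset.range x).filter fun y =>
      (∀ i, ((σ₁ i : ℕ)) ≠ y) ∧ (∀ i, n₀ + (σ₂ i : ℕ) ≠ y)).card
  else x - 2 * p

/-- The pairing `F(σ₁,σ₂,π')` of the ground set `{0,…,N-1}`: it contains the `p` pairs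
`{σ₁(i), n₀+σ₂(i)}`, and its remaining pairs are exactly the `φ`-preimages of the pairs
of `π'`. -/
def Fpair (N n₀ n₁ p : ℕ) (σ₁ : Fin p → Fin n₀) (σ₂ : Fin p → Fin n₁)
    (π' : Finset (Finset ℕ)) : Finset (Finset ℕ) :=
  (Finset.univ.image fun i : Fin p => ({(σ₁ i : ℕ), n₀ + (σ₂ i : ℕ)} : Finset ℕ)) ∪
  π'.image fun pr => (Finset.range N).filter fun x =>
    (x < n₀ + n₁ → (∀ i, (σ₁ i : ℕ) ≠ x) ∧ (∀ i, n₀ + (σ₂ i : ℕ) ≠ x)) ∧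
    phiF n₀ n₁ p σ₁ σ₂ x ∈ pr

/-- Block sizes `(n₁+n₂-2p, n₃, …, n_r)` after contracting the first two blocks. -/
def contractedSizes (n : ℕ → ℕ) (p : ℕ) : ℕ → ℕ
  | 0 => n 0 + n 1 - 2 * p
  | k + 1 => n (k + 2)

/-- Kernels `(f₁ ⊗_q^p f₂, f₃, …, f_r)` after contracting the first two kernels. -/
def contractedKernels (n : ℕ → ℕ) (p : ℕ) (q : ℝ) (f : ∀ i, (Fin (n i) → ℝ) → ℝ) :
    ∀ j, (Fin (contractedSizes n p j) → ℝ) → ℝ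
  | 0 => qcontr (n 0) (n 1) p q (f 0) (f 1)
  | k + 1 => f (k + 2)

end

/-!
A pairing in `C₂(n ⊗ n)` joins each point `i` of the first block to a point `n + τ i` of the
second, for a permutation `τ`. The pairs of `i < j` cross exactly when `τ i < τ j`, i.e. when
`(i, j)` is an inversion of `σ = rev ∘ τ`, and the pairing integral is
`∫ f(v) g(v ∘ τ⁻¹) dv`, which becomes the `σ`-term of `⟨f, g*⟩_q` after the substitution
`v = t ∘ σ`.
-/

open Finset

instance : SigmaFinite mR := by unfold mR; infer_instance

theorem integral_comp_equiv_pi {ι κ β E : Type*} [Fintype ι] [Fintype κ] [MeasurableSpace β]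
    [NormedAddCommGroup E] [NormedSpace ℝ E] (μ : Measure β) [SigmaFinite μ] (e : ι ≃ κ)
    (F : (ι → β) → E) :
    ∫ u : κ → β, F (fun i => u (e i)) ∂ Measure.pi (fun _ => μ) =
      ∫ v, F v ∂ Measure.pi (fun _ => μ) :=
  (measurePreserving_arrowCongr' (fun _ => μ) (fun _ => μ) e.symm (MeasurableEquiv.refl β)
    fun _ => MeasurePreserving.id μ).integral_comp' F

theorem existsUnique_of_filter_eq_singleton {α : Type*} {s : Finset α} {P : α → Prop}
    [DecidablePred P] {a : α} (h : s.filter P = {a}) : ∃! x, x ∈ s ∧ P x :=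
  ⟨a, mem_filter.mp (h ▸ mem_singleton_self a),
    fun _ hx => mem_singleton.mp (h ▸ mem_filter.mpr hx)⟩

theorem off_const (n r : ℕ) : off (fun _ => n) r = r * n := by
  simp [off]

theorem mem_respPairings {r : ℕ} {n : ℕ → ℕ} {π : Finset (Finset ℕ)} :
    π ∈ respPairings r n ↔ Respects r n π := by
  classical
  refine ⟨fun h => (mem_filter.mp h).2, fun h => mem_filter.mpr ⟨?_, h⟩⟩
  exact mem_powerset.mpr fun pr hpr => mem_powerset.mpr (h.1.1 pr hpr).2

section PairOf

variable {n : ℕ}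

def pairOf (n : ℕ) (τ : Equiv.Perm (Fin n)) : Finset (Finset ℕ) :=
  univ.image fun i : Fin n => {(i : ℕ), n + (τ i : ℕ)}

theorem mem_pairOf {τ : Equiv.Perm (Fin n)} {pr : Finset ℕ} :
    pr ∈ pairOf n τ ↔ ∃ i : Fin n, pr = {(i : ℕ), n + (τ i : ℕ)} := by
  simp [pairOf, eq_comm]

theorem eq_of_pair_eq_pair {i j a b : Fin n}
    (h : ({(i : ℕ), n + (a : ℕ)} : Finset ℕ) = {(j : ℕ), n + (b : ℕ)}) : i = j ∧ a = b := by
  have hi : (i : ℕ) ∈ ({(j : ℕ), n + (b : ℕ)} : Finset ℕ) := h ▸ by simp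
  have ha : n + (a : ℕ) ∈ ({(j : ℕ), n + (b : ℕ)} : Finset ℕ) := h ▸ by simp
  simp only [mem_insert, mem_singleton] at hi ha
  omega

theorem filter_mem_pairOf (τ : Equiv.Perm (Fin n)) (i : Fin n) {x : ℕ}
    (hx : x = i ∨ x = n + τ i) :
    (pairOf n τ).filter (x ∈ ·) = {{(i : ℕ), n + (τ i : ℕ)}} := by
  ext pr
  simp only [mem_filter, mem_pairOf, mem_singleton]
  constructor
  · rintro ⟨⟨j, rfl⟩, hxj⟩
    suffices j = i by rw [this]
    simp only [mem_insert, mem_singleton] at hxj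
    have hτ : (τ i : ℕ) = τ j → i = j := fun h => τ.injective (Fin.ext h)
    omega
  · rintro rfl
    exact ⟨⟨i, rfl⟩, by simp only [mem_insert, mem_singleton]; omega⟩

theorem pairOf_respects (τ : Equiv.Perm (Fin n)) : Respects 2 (fun _ => n) (pairOf n τ) := by
  simp only [Respects, IsPairingOn, off_const]
  refine ⟨⟨fun pr hpr => ?_, fun x hx => ?_⟩, fun pr hpr => ?_⟩
  · obtain ⟨i, rfl⟩ := mem_pairOf.mp hpr
    refine ⟨card_pair (by omega), fun x hx => ?_⟩
    simp only [mem_insert, mem_singleton] at hx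
    simp only [mem_range]
    omega
  · by_cases hxn : x < n
    · exact existsUnique_of_filter_eq_singleton (filter_mem_pairOf τ ⟨x, hxn⟩ (.inl rfl))
    · refine existsUnique_of_filter_eq_singleton
        (filter_mem_pairOf τ (τ.symm ⟨x - n, by omega⟩) (.inr ?_))
      simp only [Equiv.apply_symm_apply]
      omega
  · rintro ⟨b, hb, hall⟩
    obtain ⟨i, rfl⟩ := mem_pairOf.mp hpr
    have hlo := hall i (by simp)
    have hhi := hall (n + τ i) (by simp)
    interval_cases b <;> omega

variable {π : Finset (Finset ℕ)}

theorem Respects.existsUnique_mem (hπ : Respects 2 (fun _ => n) π) {x : ℕ} (hx : x < 2 * n) :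
    ∃! pr, pr ∈ π ∧ x ∈ pr :=
  hπ.1.2 x (by rwa [off_const])

theorem Respects.exists_eq_pair {pr : Finset ℕ} (hπ : Respects 2 (fun _ => n) π)
    (hpr : pr ∈ π) : ∃ a b : Fin n, pr = {(a : ℕ), n + (b : ℕ)} := by
  obtain ⟨⟨hpair, -⟩, hcross⟩ := hπ
  simp only [off_const] at hpair hcross
  obtain ⟨hcard, hsub⟩ := hpair pr hpr
  obtain ⟨x, y, -, rfl⟩ := card_eq_two.mp hcard
  have hx : x < 2 * n := mem_range.mp (hsub (by simp))
  have hy : y < 2 * n := mem_range.mp (hsub (by simp))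
  have hlo : ¬ (x < n ∧ y < n) := fun h => hcross _ hpr ⟨0, by norm_num, by simp; omega⟩
  have hhi : ¬ (n ≤ x ∧ n ≤ y) := fun h => hcross _ hpr ⟨1, by norm_num, by simp; omega⟩
  rcases lt_or_ge x n with hxn | hxn
  · refine ⟨⟨x, hxn⟩, ⟨y - n, by omega⟩, ?_⟩
    simp only [show n + (y - n) = y by omega]
  · refine ⟨⟨y, by omega⟩, ⟨x - n, by omega⟩, ?_⟩
    simp only [show n + (x - n) = x by omega, pair_comm]

theorem Respects.exists_eq_pairOf (hπ : Respects 2 (fun _ => n) π) :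
    ∃ τ : Equiv.Perm (Fin n), π = pairOf n τ := by
  have hpartner (i : Fin n) : ∃ b : Fin n, {(i : ℕ), n + (b : ℕ)} ∈ π := by
    obtain ⟨pr, ⟨hpr, hipr⟩, -⟩ := hπ.existsUnique_mem (x := i) (by omega)
    obtain ⟨a, b, rfl⟩ := hπ.exists_eq_pair hpr
    simp only [mem_insert, mem_singleton] at hipr
    obtain rfl : i = a := Fin.ext (by omega)
    exact ⟨b, hpr⟩
  choose τ hτ using hpartner
  have hτ_inj : Function.Injective τ := fun i j hij =>
    (eq_of_pair_eq_pair ((hπ.existsUnique_mem (x := n + τ j) (by omega)).unique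
      ⟨hij ▸ hτ i, by simp⟩ ⟨hτ j, by simp⟩)).1
  refine ⟨Equiv.ofBijective τ hτ_inj.bijective_of_finite, Subset.antisymm (fun pr hpr => ?_)
    fun pr hpr => ?_⟩
  · obtain ⟨a, b, rfl⟩ := hπ.exists_eq_pair hpr
    exact mem_pairOf.mpr ⟨a, (hπ.existsUnique_mem (x := a) (by omega)).unique
      ⟨hpr, by simp⟩ ⟨hτ a, by simp⟩⟩
  · obtain ⟨i, rfl⟩ := mem_pairOf.mp hpr
    exact hτ i

theorem pairOf_injective : Function.Injective (pairOf n) := fun τ τ' h => Equiv.ext fun i =>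
  (eq_of_pair_eq_pair (singleton_inj.mp ((filter_mem_pairOf τ i (.inl rfl)).symm.trans
    (h ▸ filter_mem_pairOf τ' i (.inl rfl))))).2

theorem respPairings_two_const : respPairings 2 (fun _ => n) = univ.image (pairOf n) := by
  ext π
  simp only [mem_image, mem_univ, true_and, mem_respPairings]
  exact ⟨fun h => h.exists_eq_pairOf.imp fun _ h => h.symm,
    by rintro ⟨τ, rfl⟩; exact pairOf_respects τ⟩

theorem crossing_pair_iff (τ : Equiv.Perm (Fin n)) (i j : Fin n) :
    Crossing {(i : ℕ), n + (τ i : ℕ)} {(j : ℕ), n + (τ j : ℕ)} ↔ i < j ∧ τ i < τ j := by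
  simp only [Crossing, mem_insert, mem_singleton, Fin.lt_def]
  constructor
  · rintro ⟨x₁, hx₁, y₁, hy₁, x₂, hx₂, y₂, hy₂, h₁, h₂, h₃⟩
    omega
  · rintro ⟨hij, hτ⟩
    exact ⟨i, .inl rfl, _, .inr rfl, j, .inl rfl, _, .inr rfl, hij, by omega, by omega⟩

theorem crNum_pairOf (τ : Equiv.Perm (Fin n)) :
    crNum (pairOf n τ) = invCount fun i => (τ i).rev := by
  classical
  let pair (i : Fin n) : Finset ℕ := {(i : ℕ), n + (τ i : ℕ)}
  have pair_mem (i : Fin n) : pair i ∈ pairOf n τ := mem_pairOf.mpr ⟨i, rfl⟩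
  refine (card_bij (fun ij _ => (pair ij.1, pair ij.2)) ?_ ?_ ?_).symm
  · rintro ⟨i, j⟩ hij
    simp only [mem_filter, mem_univ, true_and, Fin.rev_lt_rev] at hij
    exact mem_filter.mpr ⟨mem_product.mpr ⟨pair_mem i, pair_mem j⟩,
      (crossing_pair_iff τ i j).mpr hij⟩
  · rintro ⟨i, j⟩ - ⟨i', j'⟩ - h
    simp only [Prod.mk.injEq] at h
    exact Prod.ext (eq_of_pair_eq_pair h.1).1 (eq_of_pair_eq_pair h.2).1
  · rintro ⟨A, B⟩ hAB
    obtain ⟨hAB, hcr⟩ := mem_filter.mp hAB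
    obtain ⟨⟨i, rfl⟩, ⟨j, rfl⟩⟩ := (mem_product.mp hAB).imp mem_pairOf.mp mem_pairOf.mp
    exact ⟨(i, j), by simpa [Fin.rev_lt_rev] using (crossing_pair_iff τ i j).mp hcr, rfl⟩

noncomputable def pairOfEquiv (τ : Equiv.Perm (Fin n)) : Fin n ≃ {pr // pr ∈ pairOf n τ} :=
  Equiv.ofBijective (fun i => ⟨{(i : ℕ), n + (τ i : ℕ)}, mem_pairOf.mpr ⟨i, rfl⟩⟩)
    ⟨fun _ _ h => (eq_of_pair_eq_pair (congrArg Subtype.val h)).1, fun ⟨_, hpr⟩ =>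
      (mem_pairOf.mp hpr).imp fun _ h => Subtype.ext h.symm⟩

theorem filter_mem_pairOfEquiv (τ : Equiv.Perm (Fin n)) (i : Fin n) {x : ℕ}
    (hx : x = i ∨ x = n + τ i) :
    univ.filter (fun pr : {pr // pr ∈ pairOf n τ} => x ∈ pr.1) = {pairOfEquiv τ i} := by
  ext ⟨pr, hpr⟩
  have h := congrArg (pr ∈ ·) (filter_mem_pairOf τ i hx)
  simp only [mem_filter, hpr, true_and, mem_singleton, eq_iff_iff] at h
  simp only [mem_filter, mem_univ, true_and, mem_singleton, h]
  exact ⟨fun h => Subtype.ext h, congrArg Subtype.val⟩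

theorem pairingIntegral_pairOf (τ : Equiv.Perm (Fin n)) (f g : (Fin n → ℝ) → ℝ) :
    pairingIntegral (pairOf n τ)
        (fun t => f (fun i : Fin n => t (i : ℕ)) * g (fun i : Fin n => t (n + (i : ℕ)))) =
      ∫ v, f v * g (fun k => v (τ.symm k)) ∂ μn n := by
  refine (integral_comp_equiv_pi mR (pairOfEquiv τ).symm _).symm.trans ?_
  congr with v
  beta_reduce
  congr 2 <;> funext i
  · rw [filter_mem_pairOfEquiv τ i (.inl rfl), sum_singleton, Equiv.symm_apply_apply]
  · rw [filter_mem_pairOfEquiv τ (τ.symm i) (.inr (by simp)), sum_singleton,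
      Equiv.symm_apply_apply]

end PairOf

theorem stmt5_general (n : ℕ) (q : ℝ) (f g : (Fin n → ℝ) → ℝ) :
    ∑ π ∈ respPairings 2 (fun _ => n),
      q ^ crNum π * pairingIntegral π
        (fun t => f (fun i : Fin n => t (i : ℕ)) * g (fun i : Fin n => t (n + (i : ℕ)))) =
    qInner n q f (mirror g) := by
  rw [respPairings_two_const, sum_image fun _ _ _ _ h => pairOf_injective h, qInner]
  refine Fintype.sum_equiv (Equiv.mulLeft Fin.revPerm) _ _ fun τ => ?_
  rw [crNum_pairOf, pairingIntegral_pairOf]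
  congr 1
  refine (integral_comp_equiv_pi mR (Fin.revPerm * τ)
    fun v => f v * g fun k => v (τ.symm k)).symm.trans ?_
  simp [mirror, μn]

/-- For `n ≥ 1`, `q ∈ (-1,1]` and `f, g ∈ L²(ℝ₊ⁿ)`,
`Σ_{π ∈ C₂(n⊗n)} q^{Cr(π)} ∫_π f ⊗ g = ⟨f, g*⟩_q`. -/
theorem stmt5 (n : ℕ) (hn : 1 ≤ n) (q : ℝ) (hq₁ : -1 < q) (hq₂ : q ≤ 1)
    (f g : (Fin n → ℝ) → ℝ) (hf : MemLp f 2 (μn n)) (hg : MemLp g 2 (μn n)) :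
    ∑ π ∈ respPairings 2 (fun _ => n),
      q ^ crNum π * pairingIntegral π
        (fun t => f (fun i : Fin n => t (i : ℕ)) * g (fun i : Fin n => t (n + (i : ℕ)))) =
    qInner n q f (mirror g) :=
  stmt5_general n q f g
end

section
/- Let r ≥ 3, let n₁,…,n_r be positive integers, let p ∈ {1,…,min(n₁,n₂)}, let π' ∈ C₂((n₁+n₂−2p)⊗n₃⊗…⊗n_r), let σ₁:{1,…,p}→{1,…,n₁} be strictly decreasing and let σ₂:{1,…,p}→{1,…,n₂} be injective. Then Cr(F(σ₁,σ₂,π')) = α(σ₁) + β(σ₂) + Cr(π'). -/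
open MeasureTheory

section CrossAux

open Finset

variable {n₀ n₁ p : ℕ} (σ₁ : Fin p → Fin n₀) (σ₂ : Fin p → Fin n₁)

/-- The "non-special" predicate: `x` is neither a `σ₁`-value nor a shifted `σ₂`-value. -/
def NSpec (σ₁ : Fin p → Fin n₀) (σ₂ : Fin p → Fin n₁) (x : ℕ) : Prop :=
  (∀ i, ((σ₁ i : ℕ)) ≠ x) ∧ (∀ i, n₀ + (σ₂ i : ℕ) ≠ x)

instance {n₀ n₁ p : ℕ} (σ₁ : Fin p → Fin n₀) (σ₂ : Fin p → Fin n₁) :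
    DecidablePred (NSpec σ₁ σ₂) := fun x => by unfold NSpec; infer_instance

lemma nspec_of_big {x : ℕ} (hx : n₀ + n₁ ≤ x) : NSpec σ₁ σ₂ x := by
  constructor
  · intro i; have := (σ₁ i).is_lt; omega
  · intro i; have := (σ₂ i).is_lt; omega

lemma phiF_small {x : ℕ} (hx : x < n₀ + n₁) :
    phiF n₀ n₁ p σ₁ σ₂ x = ((Finset.range x).filter (NSpec σ₁ σ₂)).card := by
  simp only [phiF, hx, if_true]
  rfl

lemma phiF_big {x : ℕ} (hx : n₀ + n₁ ≤ x) :
    phiF n₀ n₁ p σ₁ σ₂ x = x - 2 * p := by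
  simp only [phiF, Nat.not_lt.2 hx, if_false]

lemma specCount (h₁ : Function.Injective σ₁) (h₂ : Function.Injective σ₂) :
    ((Finset.range (n₀ + n₁)).filter (NSpec σ₁ σ₂)).card = n₀ + n₁ - 2 * p := by
  classical
  have hcompl : (Finset.range (n₀ + n₁)).filter (fun x => ¬ NSpec σ₁ σ₂ x) =
      (Finset.univ.image fun i => ((σ₁ i : ℕ))) ∪
      (Finset.univ.image fun i => n₀ + (σ₂ i : ℕ)) := by
    ext x
    simp only [mem_filter, mem_range, mem_union, mem_image, mem_univ, true_and, NSpec,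
      not_and_or, not_forall, not_not]
    constructor
    · rintro ⟨-, h | h⟩
      · obtain ⟨i, hi⟩ := h; exact Or.inl ⟨i, by omega⟩
      · obtain ⟨i, hi⟩ := h; exact Or.inr ⟨i, by omega⟩
    · rintro (⟨i, hi⟩ | ⟨i, hi⟩)
      · have := (σ₁ i).is_lt; exact ⟨by omega, Or.inl ⟨i, by omega⟩⟩
      · have := (σ₂ i).is_lt; exact ⟨by omega, Or.inr ⟨i, by omega⟩⟩
  have hdisj : Disjoint (Finset.univ.image fun i => ((σ₁ i : ℕ)))
      (Finset.univ.image fun i => n₀ + (σ₂ i : ℕ)) := by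
    rw [Finset.disjoint_left]
    rintro a ha hb
    simp only [mem_image, mem_univ, true_and] at ha hb
    obtain ⟨i, hi⟩ := ha; obtain ⟨j, hj⟩ := hb
    have := (σ₁ i).is_lt; omega
  have hinj1 : Function.Injective (fun i => ((σ₁ i : ℕ))) := fun i j h => h₁ (Fin.ext h)
  have hinj2 : Function.Injective (fun i => n₀ + ((σ₂ i : ℕ))) := fun i j h => by
    apply h₂ (Fin.ext _); simpa using h
  have hcard : ((Finset.range (n₀ + n₁)).filter (fun x => ¬ NSpec σ₁ σ₂ x)).card = 2 * p := by
    rw [hcompl, Finset.card_union_of_disjoint hdisj,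
      Finset.card_image_of_injective _ hinj1, Finset.card_image_of_injective _ hinj2]
    simp [two_mul]
  have := Finset.card_filter_add_card_filter_not (s := Finset.range (n₀ + n₁))
    (NSpec σ₁ σ₂)
  rw [Finset.card_range] at this
  omega

lemma phiF_lt_small (h₁ : Function.Injective σ₁) (h₂ : Function.Injective σ₂)
    {x : ℕ} (hx : x < n₀ + n₁) (hxs : NSpec σ₁ σ₂ x) :
    phiF n₀ n₁ p σ₁ σ₂ x < n₀ + n₁ - 2 * p := by
  rw [phiF_small _ _ hx]
  rw [← specCount σ₁ σ₂ h₁ h₂]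
  apply Finset.card_lt_card
  constructor
  · exact Finset.filter_subset_filter _ (by intro y hy; simp only [mem_range] at *; omega)
  · intro hsub
    have hxmem : x ∈ (Finset.range (n₀ + n₁)).filter (NSpec σ₁ σ₂) := by
      simp [mem_filter, hx, hxs]
    have := hsub hxmem
    simp [mem_filter] at this

lemma phiF_strict_mono (h₁ : Function.Injective σ₁) (h₂ : Function.Injective σ₂)
    (hp1 : p ≤ n₀) (hp2 : p ≤ n₁) {x y : ℕ} (hxy : x < y)
    (hxs : NSpec σ₁ σ₂ x) (hys : NSpec σ₁ σ₂ y) :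
    phiF n₀ n₁ p σ₁ σ₂ x < phiF n₀ n₁ p σ₁ σ₂ y := by
  by_cases hy : y < n₀ + n₁
  · have hx : x < n₀ + n₁ := by omega
    rw [phiF_small _ _ hx, phiF_small _ _ hy]
    apply Finset.card_lt_card
    constructor
    · exact Finset.filter_subset_filter _ (by intro z hz; simp only [mem_range] at *; omega)
    · intro hsub
      have hxmem : x ∈ (Finset.range y).filter (NSpec σ₁ σ₂) := by
        simp [mem_filter, hxy, hxs]
      have := hsub hxmem
      simp [mem_filter] at this
  · push_neg at hy
    rw [phiF_big _ _ hy]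
    by_cases hx : x < n₀ + n₁
    · have := phiF_lt_small σ₁ σ₂ h₁ h₂ hx hxs
      omega
    · push_neg at hx
      rw [phiF_big _ _ hx]
      omega

lemma phiF_lt_iff (h₁ : Function.Injective σ₁) (h₂ : Function.Injective σ₂)
    (hp1 : p ≤ n₀) (hp2 : p ≤ n₁) {x y : ℕ}
    (hxs : NSpec σ₁ σ₂ x) (hys : NSpec σ₁ σ₂ y) :
    x < y ↔ phiF n₀ n₁ p σ₁ σ₂ x < phiF n₀ n₁ p σ₁ σ₂ y := by
  constructor
  · exact fun h => phiF_strict_mono σ₁ σ₂ h₁ h₂ hp1 hp2 h hxs hys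
  · intro h
    rcases lt_trichotomy x y with h' | rfl | h'
    · exact h'
    · omega
    · have := phiF_strict_mono σ₁ σ₂ h₁ h₂ hp1 hp2 h' hys hxs; omega

lemma phiF_injOn (h₁ : Function.Injective σ₁) (h₂ : Function.Injective σ₂)
    (hp1 : p ≤ n₀) (hp2 : p ≤ n₁) {x y : ℕ}
    (hxs : NSpec σ₁ σ₂ x) (hys : NSpec σ₁ σ₂ y)
    (h : phiF n₀ n₁ p σ₁ σ₂ x = phiF n₀ n₁ p σ₁ σ₂ y) : x = y := by
  rcases lt_trichotomy x y with h' | rfl | h'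
  · have := phiF_strict_mono σ₁ σ₂ h₁ h₂ hp1 hp2 h' hxs hys; omega
  · rfl
  · have := phiF_strict_mono σ₁ σ₂ h₁ h₂ hp1 hp2 h' hys hxs; omega

lemma phiF_surj (h₁ : Function.Injective σ₁) (h₂ : Function.Injective σ₂)
    (hp1 : p ≤ n₀) (hp2 : p ≤ n₁) {N z : ℕ} (hN : n₀ + n₁ ≤ N) (hz : z < N - 2 * p) :
    ∃ x, x < N ∧ NSpec σ₁ σ₂ x ∧ phiF n₀ n₁ p σ₁ σ₂ x = z := by
  by_cases hc : n₀ + n₁ - 2 * p ≤ z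
  · refine ⟨z + 2 * p, by omega, nspec_of_big σ₁ σ₂ (by omega), ?_⟩
    rw [phiF_big _ _ (by omega)]
    omega
  · push_neg at hc
    set G := (Finset.range (n₀ + n₁)).filter (NSpec σ₁ σ₂) with hG
    have himg : G.image (phiF n₀ n₁ p σ₁ σ₂) = Finset.range (n₀ + n₁ - 2 * p) := by
      apply Finset.eq_of_subset_of_card_le
      · intro z' hz'
        simp only [Finset.mem_image] at hz'
        obtain ⟨x, hx, rfl⟩ := hz'
        simp only [hG, mem_filter, mem_range] at hx
        exact Finset.mem_range.2 (phiF_lt_small σ₁ σ₂ h₁ h₂ hx.1 hx.2)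
      · rw [Finset.card_range]
        rw [Finset.card_image_of_injOn]
        · rw [hG, specCount σ₁ σ₂ h₁ h₂]
        · intro x hx y hy hxy
          simp only [hG, Finset.coe_filter, Set.mem_setOf_eq, mem_range] at hx hy
          exact phiF_injOn σ₁ σ₂ h₁ h₂ hp1 hp2 hx.2 hy.2 hxy
    have hzmem : z ∈ Finset.range (n₀ + n₁ - 2 * p) := Finset.mem_range.2 hc
    rw [← himg] at hzmem
    simp only [Finset.mem_image] at hzmem
    obtain ⟨x, hx, hfx⟩ := hzmem
    simp only [hG, mem_filter, mem_range] at hx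
    exact ⟨x, by omega, hx.2, hfx⟩

lemma crossing_pair_iff_s6 {a₁ b₁ a₂ b₂ : ℕ} (h₁ : a₁ < b₁) (h₂ : a₂ < b₂) :
    Crossing {a₁, b₁} {a₂, b₂} ↔ a₁ < a₂ ∧ a₂ < b₁ ∧ b₁ < b₂ := by
  simp only [Crossing, Finset.mem_insert, Finset.mem_singleton]
  constructor
  · rintro ⟨x₁, hx₁, y₁, hy₁, x₂, hx₂, y₂, hy₂, l1, l2, l3⟩
    rcases hx₁ with rfl | rfl <;> rcases hy₁ with rfl | rfl <;>
      rcases hx₂ with rfl | rfl <;> rcases hy₂ with rfl | rfl <;> omega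
  · rintro ⟨u, v, w⟩
    exact ⟨a₁, Or.inl rfl, b₁, Or.inr rfl, a₂, Or.inl rfl, b₂, Or.inr rfl, u, v, w⟩

lemma crNum_def (π : Finset (Finset ℕ)) [DecidablePred fun pp : Finset ℕ × Finset ℕ => Crossing pp.1 pp.2] :
    crNum π = ((π ×ˢ π).filter fun pp => Crossing pp.1 pp.2).card := by
  unfold crNum
  congr 1
  exact Finset.filter_congr_decidable _ _ _

end CrossAux

/-- `Cr(F(σ₁,σ₂,π')) = α(σ₁) + β(σ₂) + Cr(π')`. -/
theorem stmt6 (r : ℕ) (hr : 3 ≤ r) (n : ℕ → ℕ) (hn : ∀ i < r, 1 ≤ n i)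
    (p : ℕ) (hp1 : 1 ≤ p) (hp2 : p ≤ n 0) (hp3 : p ≤ n 1)
    (σ₁ : Fin p → Fin (n 0)) (hσ₁ : ∀ i j : Fin p, i < j → σ₁ j < σ₁ i)
    (σ₂ : Fin p → Fin (n 1)) (hσ₂ : Function.Injective σ₂)
    (π' : Finset (Finset ℕ)) (hπ' : Respects (r - 1) (contractedSizes n p) π') :
    crNum (Fpair (off n r) (n 0) (n 1) p σ₁ σ₂ π') =
      alphaA (n 0) p σ₁ + betaB (n 1) p σ₂ + crNum π' := by
  classical
  have hσ₁inj : Function.Injective σ₁ := by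
    intro i j h
    rcases lt_trichotomy i j with h' | h' | h'
    · have := hσ₁ i j h'; rw [h] at this; exact absurd this (lt_irrefl _)
    · exact h'
    · have := hσ₁ j i h'; rw [h] at this; exact absurd this (lt_irrefl _)
  set N := off n r with hN
  have hNge : n 0 + n 1 ≤ N := by
    have hsub : ({0, 1} : Finset ℕ) ⊆ Finset.range r := by
      intro x hx
      simp only [Finset.mem_insert, Finset.mem_singleton] at hx
      rcases hx with rfl | rfl <;> (simp only [Finset.mem_range]; omega)
    have := Finset.sum_le_sum_of_subset (f := n) hsub
    rw [Finset.sum_pair (by norm_num : (0:ℕ) ≠ 1)] at this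
    exact this
  have hM : off (contractedSizes n p) (r - 1) = N - 2 * p := by
    obtain ⟨m, rfl⟩ : ∃ m, r = m + 3 := ⟨r - 3, by omega⟩
    have e1 : N = (∑ j ∈ Finset.range (m + 1), n (j + 2)) + n 1 + n 0 := by
      rw [hN]
      unfold off
      rw [Finset.sum_range_succ' (fun j => n j) (m + 2),
        Finset.sum_range_succ' (fun j => n (j + 1)) (m + 1)]
    have e2 : off (contractedSizes n p) (m + 2) =
        (∑ j ∈ Finset.range (m + 1), n (j + 2)) + (n 0 + n 1 - 2 * p) := by
      unfold off
      rw [Finset.sum_range_succ' (fun j => contractedSizes n p j) (m + 1)]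
      rfl
    have : m + 3 - 1 = m + 2 := by omega
    rw [this, e2]
    omega
  obtain ⟨⟨hpr2, hcov⟩, hblk⟩ := hπ'
  rw [hM] at hpr2 hcov
  have hbig : ∀ pr ∈ π', ∃ a ∈ pr, n 0 + n 1 - 2 * p ≤ a := by
    intro pr hpr
    have h0 := hblk pr hpr
    push_neg at h0
    have h1 := h0 0 (by omega)
    obtain ⟨a, ha, h2⟩ := h1
    refine ⟨a, ha, ?_⟩
    have e0 : off (contractedSizes n p) 0 = 0 := by simp [off]
    have e1 : off (contractedSizes n p) 1 = n 0 + n 1 - 2 * p := by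
      simp only [off, Finset.sum_range_one]
      rfl
    rw [e0, e1] at h2
    omega
  -- abbreviations and basic facts about φ
  have hlt_iff : ∀ x y : ℕ, NSpec σ₁ σ₂ x → NSpec σ₁ σ₂ y →
      (x < y ↔ phiF (n 0) (n 1) p σ₁ σ₂ x < phiF (n 0) (n 1) p σ₁ σ₂ y) :=
    fun x y hx hy => phiF_lt_iff σ₁ σ₂ hσ₁inj hσ₂ hp2 hp3 hx hy
  have hinj : ∀ x y : ℕ, NSpec σ₁ σ₂ x → NSpec σ₁ σ₂ y →
      phiF (n 0) (n 1) p σ₁ σ₂ x = phiF (n 0) (n 1) p σ₁ σ₂ y → x = y :=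
    fun x y hx hy h => phiF_injOn σ₁ σ₂ hσ₁inj hσ₂ hp2 hp3 hx hy h
  have hsurj : ∀ a, a < N - 2 * p → ∃ x, x < N ∧ NSpec σ₁ σ₂ x ∧
      phiF (n 0) (n 1) p σ₁ σ₂ x = a :=
    fun a ha => phiF_surj σ₁ σ₂ hσ₁inj hσ₂ hp2 hp3 hNge ha
  have hsmall : ∀ x, x < n 0 + n 1 → NSpec σ₁ σ₂ x →
      phiF (n 0) (n 1) p σ₁ σ₂ x < n 0 + n 1 - 2 * p :=
    fun x hx hxs => phiF_lt_small σ₁ σ₂ hσ₁inj hσ₂ hx hxs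
  have hφrange : ∀ x, x < N → NSpec σ₁ σ₂ x → phiF (n 0) (n 1) p σ₁ σ₂ x < N - 2 * p := by
    intro x hx hxs
    by_cases h : x < n 0 + n 1
    · have := hsmall x h hxs; omega
    · rw [phiF_big _ _ (by omega)]; omega
  -- the two families of pairs
  obtain ⟨Apair, hApair⟩ : ∃ Apair : Fin p → Finset ℕ,
      Apair = fun i => ({(σ₁ i : ℕ), n 0 + (σ₂ i : ℕ)} : Finset ℕ) := ⟨_, rfl⟩
  obtain ⟨Bf, hBf⟩ : ∃ Bf : Finset ℕ → Finset ℕ,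
      Bf = fun pr => (Finset.range N).filter fun x =>
        (x < n 0 + n 1 → (∀ i, (σ₁ i : ℕ) ≠ x) ∧ (∀ i, n 0 + (σ₂ i : ℕ) ≠ x)) ∧
        phiF (n 0) (n 1) p σ₁ σ₂ x ∈ pr := ⟨_, rfl⟩
  have hF : Fpair N (n 0) (n 1) p σ₁ σ₂ π' =
      (Finset.univ.image Apair) ∪ π'.image Bf := by
    rw [hApair, hBf]; rfl
  have hmemB : ∀ pr x, x ∈ Bf pr ↔ x < N ∧ NSpec σ₁ σ₂ x ∧
      phiF (n 0) (n 1) p σ₁ σ₂ x ∈ pr := by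
    intro pr x
    rw [hBf]
    simp only [Finset.mem_filter, Finset.mem_range]
    constructor
    · rintro ⟨h1, h2, h3⟩
      refine ⟨h1, ?_, h3⟩
      by_cases h : x < n 0 + n 1
      · exact h2 h
      · exact nspec_of_big σ₁ σ₂ (by omega)
    · rintro ⟨h1, h2, h3⟩
      exact ⟨h1, fun _ => h2, h3⟩
  have hmemA : ∀ i x, x ∈ Apair i ↔ x = (σ₁ i : ℕ) ∨ x = n 0 + (σ₂ i : ℕ) := by
    intro i x; rw [hApair]; simp
  have hApairinj : Function.Injective Apair := by
    intro i j h
    have h1 : (σ₁ i : ℕ) ∈ Apair i := (hmemA i _).2 (Or.inl rfl)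
    rw [h] at h1
    rw [hmemA] at h1
    have := (σ₁ i).is_lt
    rcases h1 with h1 | h1
    · exact hσ₁inj (Fin.ext h1)
    · omega
  have hBfinj : ∀ pr ∈ π', ∀ pr' ∈ π', Bf pr = Bf pr' → pr = pr' := by
    have key : ∀ q ∈ π', ∀ q' ∈ π', Bf q = Bf q' → q ⊆ q' := by
      intro q hq q' hq' hqq' a ha
      have haN : a < N - 2 * p := Finset.mem_range.1 ((hpr2 q hq).2 ha)
      obtain ⟨x, hx1, hx2, hx3⟩ := hsurj a haN
      have hxq : x ∈ Bf q := (hmemB q x).2 ⟨hx1, hx2, by rw [hx3]; exact ha⟩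
      rw [hqq'] at hxq
      have := ((hmemB q' x).1 hxq).2.2
      rwa [hx3] at this
    intro pr hpr pr' hpr' h
    exact Finset.Subset.antisymm (key pr hpr pr' hpr' h) (key pr' hpr' pr hpr h.symm)
  obtain ⟨prOf, hprOf⟩ : ∃ f : ℕ → Finset ℕ, ∀ x, phiF (n 0) (n 1) p σ₁ σ₂ x < N - 2 * p →
      f x ∈ π' ∧ phiF (n 0) (n 1) p σ₁ σ₂ x ∈ f x := by
    refine ⟨fun x => if h : ∃ pr, pr ∈ π' ∧ phiF (n 0) (n 1) p σ₁ σ₂ x ∈ pr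
      then h.choose else ∅, ?_⟩
    intro x hx
    have hex : ∃ pr, pr ∈ π' ∧ phiF (n 0) (n 1) p σ₁ σ₂ x ∈ pr := (hcov _ hx).exists
    simp only [dif_pos hex]
    exact hex.choose_spec
  have hprOf_eq : ∀ x pr, pr ∈ π' → phiF (n 0) (n 1) p σ₁ σ₂ x ∈ pr → prOf x = pr := by
    intro x pr hpr hmem
    have hx : phiF (n 0) (n 1) p σ₁ σ₂ x < N - 2 * p :=
      Finset.mem_range.1 ((hpr2 pr hpr).2 hmem)
    obtain ⟨h1, h2⟩ := hprOf x hx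
    exact (hcov _ hx).unique ⟨h1, h2⟩ ⟨hpr, hmem⟩
  have hone : ∀ pr ∈ π', ∀ a ∈ pr, ∀ b ∈ pr,
      a < n 0 + n 1 - 2 * p → b < n 0 + n 1 - 2 * p → a = b := by
    intro pr hpr a ha b hb ha' hb'
    obtain ⟨u, v, huv, rfl⟩ := Finset.card_eq_two.1 (hpr2 pr hpr).1
    obtain ⟨w, hw, hwge⟩ := hbig _ hpr
    simp only [Finset.mem_insert, Finset.mem_singleton] at ha hb hw
    rcases ha with rfl | rfl <;> rcases hb with rfl | rfl <;> rcases hw with h | h <;> omega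
  -- the four counts
  set A := Finset.univ.image Apair with hA
  set B := π'.image Bf with hB
  have hAmem : ∀ i, Apair i ∈ A := by
    intro i; rw [hA]; exact Finset.mem_image_of_mem _ (Finset.mem_univ _)
  have hBmem : ∀ pr, pr ∈ π' → Bf pr ∈ B := by
    intro pr hpr; rw [hB]; exact Finset.mem_image_of_mem _ hpr
  have hlift : ∀ pr, pr ∈ π' → ∀ a ∈ pr, ∃ x, x ∈ Bf pr ∧ NSpec σ₁ σ₂ x ∧
      phiF (n 0) (n 1) p σ₁ σ₂ x = a := by
    intro pr hpr a ha
    obtain ⟨x, hx1, hx2, hx3⟩ := hsurj a (Finset.mem_range.1 ((hpr2 pr hpr).2 ha))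
    exact ⟨x, (hmemB _ _).2 ⟨hx1, hx2, hx3 ▸ ha⟩, hx2, hx3⟩
  have hAA : ((A ×ˢ A).filter fun pp => Crossing pp.1 pp.2).card = invCount σ₂ := by
    have hinv : invCount σ₂ = (Finset.univ.filter fun ij : Fin p × Fin p =>
        ij.1 < ij.2 ∧ σ₂ ij.2 < σ₂ ij.1).card := by
      rfl
    rw [hinv]
    symm
    apply Finset.card_bij (i := fun ij _ => (Apair ij.2, Apair ij.1))
    · rintro ⟨a, b⟩ hab
      rw [Finset.mem_filter] at hab
      obtain ⟨-, hc⟩ := hab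
      dsimp only at hc
      obtain ⟨h1, h2⟩ := hc
      rw [Fin.lt_def] at h1 h2
      have ha0 := (σ₁ a).is_lt
      have hb0 := (σ₁ b).is_lt
      have ha2 := (σ₂ a).is_lt
      have hb2 := (σ₂ b).is_lt
      have hσab : (σ₁ b : ℕ) < (σ₁ a : ℕ) := by
        have := hσ₁ a b (by rw [Fin.lt_def]; exact h1)
        rwa [Fin.lt_def] at this
      rw [Finset.mem_filter, Finset.mem_product]
      refine ⟨⟨hAmem _, hAmem _⟩, ?_⟩
      simp only [hApair]
      rw [crossing_pair_iff_s6 (by omega) (by omega)]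
      exact ⟨hσab, by omega, by omega⟩
    · rintro ⟨a, b⟩ ha ⟨c, d⟩ hc heq
      rw [Prod.mk.injEq] at heq
      have h1 := hApairinj heq.1
      have h2 := hApairinj heq.2
      rw [Prod.mk.injEq]
      exact ⟨h2, h1⟩
    · rintro ⟨P, Q⟩ hPQ
      rw [Finset.mem_filter, Finset.mem_product] at hPQ
      obtain ⟨⟨hPA, hQA⟩, hcr⟩ := hPQ
      rw [hA, Finset.mem_image] at hPA hQA
      obtain ⟨i, -, rfl⟩ := hPA
      obtain ⟨j, -, rfl⟩ := hQA
      have hi0 := (σ₁ i).is_lt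
      have hj0 := (σ₁ j).is_lt
      have hi2 := (σ₂ i).is_lt
      have hj2 := (σ₂ j).is_lt
      simp only [hApair] at hcr
      rw [crossing_pair_iff_s6 (by omega) (by omega)] at hcr
      obtain ⟨c1, c2, c3⟩ := hcr
      have hji : j < i := by
        rcases lt_trichotomy i j with h | rfl | h
        · have := hσ₁ i j h; rw [Fin.lt_def] at this; omega
        · omega
        · exact h
      refine ⟨(j, i), ?_, ?_⟩
      · rw [Finset.mem_filter]
        refine ⟨Finset.mem_univ _, hji, ?_⟩
        show σ₂ i < σ₂ j
        rw [Fin.lt_def]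
        omega
      · rfl
  have hBA : ((B ×ˢ A).filter fun pp => Crossing pp.1 pp.2) = ∅ := by
    rw [Finset.eq_empty_iff_forall_notMem]
    rintro ⟨Q, P⟩ hmem
    rw [Finset.mem_filter, Finset.mem_product] at hmem
    obtain ⟨⟨hQB, hPA⟩, hcr⟩ := hmem
    rw [hB, Finset.mem_image] at hQB
    rw [hA, Finset.mem_image] at hPA
    obtain ⟨pr, hpr, rfl⟩ := hQB
    obtain ⟨i, -, rfl⟩ := hPA
    obtain ⟨x₁, hx₁, y₁, hy₁, x₂, hx₂, y₂, hy₂, l1, l2, l3⟩ := hcr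
    rw [hmemA] at hx₂ hy₂
    rw [hmemB] at hx₁ hy₁
    obtain ⟨hx₁N, hx₁s, hx₁p⟩ := hx₁
    obtain ⟨hy₁N, hy₁s, hy₁p⟩ := hy₁
    have hi1 := (σ₁ i).is_lt
    have hi2 := (σ₂ i).is_lt
    have hxy : x₂ = (σ₁ i : ℕ) ∧ y₂ = n 0 + (σ₂ i : ℕ) := by
      rcases hx₂ with h | h <;> rcases hy₂ with h' | h' <;>
        first
        | exact ⟨h, h'⟩
        | omega
    obtain ⟨rfl, rfl⟩ := hxy
    have hs1 : phiF (n 0) (n 1) p σ₁ σ₂ x₁ < n 0 + n 1 - 2 * p :=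
      hsmall x₁ (by omega) hx₁s
    have hs2 : phiF (n 0) (n 1) p σ₁ σ₂ y₁ < n 0 + n 1 - 2 * p :=
      hsmall y₁ (by omega) hy₁s
    have := hone pr hpr _ hx₁p _ hy₁p hs1 hs2
    have := hinj x₁ y₁ hx₁s hy₁s this
    omega
  have hAB : ((A ×ˢ B).filter fun pp => Crossing pp.1 pp.2).card =
      ∑ i : Fin p, ((Finset.range (n 0 + n 1)).filter fun x =>
        NSpec σ₁ σ₂ x ∧ (σ₁ i : ℕ) < x ∧ x < n 0 + (σ₂ i : ℕ)).card := by
    rw [← Finset.card_sigma]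
    symm
    apply Finset.card_bij (i := fun s _ => (Apair s.1, Bf (prOf s.2)))
    · rintro ⟨i, x⟩ hs
      rw [Finset.mem_sigma] at hs
      have hx := hs.2
      dsimp only at hx
      rw [Finset.mem_filter, Finset.mem_range] at hx
      obtain ⟨hxlt, hxs, hx1, hx2⟩ := hx
      have hi1 := (σ₁ i).is_lt
      have hi2 := (σ₂ i).is_lt
      have hφx : phiF (n 0) (n 1) p σ₁ σ₂ x < n 0 + n 1 - 2 * p := hsmall x hxlt hxs
      obtain ⟨hpr, hmem⟩ := hprOf x (by omega)
      rw [Finset.mem_filter, Finset.mem_product]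
      refine ⟨⟨hAmem i, hBmem _ hpr⟩, ?_⟩
      obtain ⟨a, ha, hage⟩ := hbig _ hpr
      obtain ⟨y, hym, hys, hye⟩ := hlift _ hpr a ha
      have hybig : n 0 + n 1 ≤ y := by
        by_contra hy
        have := hsmall y (by omega) hys
        rw [hye] at this
        omega
      refine ⟨(σ₁ i : ℕ), (hmemA i _).2 (Or.inl rfl), n 0 + (σ₂ i : ℕ),
        (hmemA i _).2 (Or.inr rfl), x, (hmemB _ _).2 ⟨by omega, hxs, hmem⟩, y, hym,
        hx1, hx2, by omega⟩
    · rintro ⟨i, x⟩ hs ⟨j, y⟩ ht heq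
      rw [Finset.mem_sigma, Finset.mem_filter, Finset.mem_range] at hs ht
      dsimp only at hs ht
      obtain ⟨-, hxlt, hxs, -, -⟩ := hs
      obtain ⟨-, hylt, hys, -, -⟩ := ht
      rw [Prod.mk.injEq] at heq
      obtain ⟨h1, h2⟩ := heq
      obtain rfl : i = j := hApairinj h1
      obtain ⟨hprx, hmemx⟩ := hprOf x (by have := hsmall x hxlt hxs; omega)
      obtain ⟨hpry, hmemy⟩ := hprOf y (by have := hsmall y hylt hys; omega)
      have hpr_eq : prOf x = prOf y := hBfinj _ hprx _ hpry h2
      rw [hpr_eq] at hmemx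
      have := hone _ hpry _ hmemx _ hmemy (hsmall x hxlt hxs) (hsmall y hylt hys)
      have := hinj x y hxs hys this
      subst this
      rfl
    · rintro ⟨P, Q⟩ hm
      rw [Finset.mem_filter, Finset.mem_product] at hm
      obtain ⟨⟨hPA, hQB⟩, hcr⟩ := hm
      rw [hA, Finset.mem_image] at hPA
      rw [hB, Finset.mem_image] at hQB
      obtain ⟨i, -, rfl⟩ := hPA
      obtain ⟨pr, hpr, rfl⟩ := hQB
      obtain ⟨x₁, hx₁, y₁, hy₁, x₂, hx₂, y₂, hy₂, l1, l2, l3⟩ := hcr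
      rw [hmemA] at hx₁ hy₁
      rw [hmemB] at hx₂ hy₂
      have hi1 := (σ₁ i).is_lt
      have hi2 := (σ₂ i).is_lt
      have hxy : x₁ = (σ₁ i : ℕ) ∧ y₁ = n 0 + (σ₂ i : ℕ) := by
        rcases hx₁ with h | h <;> rcases hy₁ with h' | h' <;>
          first
          | exact ⟨h, h'⟩
          | omega
      obtain ⟨rfl, rfl⟩ := hxy
      obtain ⟨hx₂N, hx₂s, hx₂p⟩ := hx₂
      refine ⟨⟨i, x₂⟩, ?_, ?_⟩
      · rw [Finset.mem_sigma, Finset.mem_filter, Finset.mem_range]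
        dsimp only
        exact ⟨Finset.mem_univ _, by omega, hx₂s, l1, l2⟩
      · have : prOf x₂ = pr := hprOf_eq _ _ hpr hx₂p
        rw [Prod.mk.injEq]
        exact ⟨rfl, by rw [this]⟩
  have hBB : ((B ×ˢ B).filter fun pp => Crossing pp.1 pp.2).card = crNum π' := by
    rw [crNum_def π']
    symm
    apply Finset.card_bij (i := fun pq _ => (Bf pq.1, Bf pq.2))
    · rintro ⟨pr, pr'⟩ hmem
      rw [Finset.mem_filter, Finset.mem_product] at hmem
      obtain ⟨⟨h1, h2⟩, hcr⟩ := hmem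
      rw [Finset.mem_filter, Finset.mem_product]
      refine ⟨⟨hBmem _ h1, hBmem _ h2⟩, ?_⟩
      obtain ⟨a₁, ha₁, b₁, hb₁, a₂, ha₂, b₂, hb₂, l1, l2, l3⟩ := hcr
      obtain ⟨x₁, hx₁m, hx₁s, hx₁e⟩ := hlift _ h1 a₁ ha₁
      obtain ⟨y₁, hy₁m, hy₁s, hy₁e⟩ := hlift _ h1 b₁ hb₁
      obtain ⟨x₂, hx₂m, hx₂s, hx₂e⟩ := hlift _ h2 a₂ ha₂
      obtain ⟨y₂, hy₂m, hy₂s, hy₂e⟩ := hlift _ h2 b₂ hb₂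
      refine ⟨x₁, hx₁m, y₁, hy₁m, x₂, hx₂m, y₂, hy₂m, ?_, ?_, ?_⟩
      · rw [hlt_iff _ _ hx₁s hx₂s, hx₁e, hx₂e]; exact l1
      · rw [hlt_iff _ _ hx₂s hy₁s, hx₂e, hy₁e]; exact l2
      · rw [hlt_iff _ _ hy₁s hy₂s, hy₁e, hy₂e]; exact l3
    · rintro ⟨pr₁, pr₂⟩ h₁ ⟨pr₃, pr₄⟩ h₂ heq
      rw [Finset.mem_filter, Finset.mem_product] at h₁ h₂
      rw [Prod.mk.injEq] at heq ⊢
      exact ⟨hBfinj _ h₁.1.1 _ h₂.1.1 heq.1, hBfinj _ h₁.1.2 _ h₂.1.2 heq.2⟩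
    · rintro ⟨Q, Q'⟩ hm
      rw [Finset.mem_filter, Finset.mem_product] at hm
      obtain ⟨⟨hQB, hQ'B⟩, hcr⟩ := hm
      rw [hB, Finset.mem_image] at hQB hQ'B
      obtain ⟨pr, hpr, rfl⟩ := hQB
      obtain ⟨pr', hpr', rfl⟩ := hQ'B
      obtain ⟨x₁, hx₁, y₁, hy₁, x₂, hx₂, y₂, hy₂, l1, l2, l3⟩ := hcr
      rw [hmemB] at hx₁ hy₁ hx₂ hy₂
      refine ⟨(pr, pr'), ?_, rfl⟩
      rw [Finset.mem_filter, Finset.mem_product]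
      refine ⟨⟨hpr, hpr'⟩, ?_⟩
      refine ⟨_, hx₁.2.2, _, hy₁.2.2, _, hx₂.2.2, _, hy₂.2.2, ?_, ?_, ?_⟩
      · rw [← hlt_iff _ _ hx₁.2.1 hx₂.2.1]; exact l1
      · rw [← hlt_iff _ _ hx₂.2.1 hy₁.2.1]; exact l2
      · rw [← hlt_iff _ _ hy₁.2.1 hy₂.2.1]; exact l3
  have hdisjAB : Disjoint A B := by
    rw [Finset.disjoint_left]
    intro P hPA hPB
    rw [hA, Finset.mem_image] at hPA
    rw [hB, Finset.mem_image] at hPB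
    obtain ⟨i, -, rfl⟩ := hPA
    obtain ⟨pr, hpr, hpr'⟩ := hPB
    have h1 : (σ₁ i : ℕ) ∈ Apair i := (hmemA i _).2 (Or.inl rfl)
    rw [← hpr'] at h1
    have := ((hmemB pr _).1 h1).2.1.1 i
    exact this rfl
  have hsplit : crNum (Fpair N (n 0) (n 1) p σ₁ σ₂ π') =
      ((A ×ˢ A).filter fun pp => Crossing pp.1 pp.2).card +
      ((A ×ˢ B).filter fun pp => Crossing pp.1 pp.2).card +
      (((B ×ˢ A).filter fun pp => Crossing pp.1 pp.2).card +
      ((B ×ˢ B).filter fun pp => Crossing pp.1 pp.2).card) := by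
    rw [crNum_def, hF]
    have hprod : (A ∪ B) ×ˢ (A ∪ B) = ((A ×ˢ A) ∪ (A ×ˢ B)) ∪ ((B ×ˢ A) ∪ (B ×ˢ B)) := by
      rw [Finset.union_product, Finset.product_union, Finset.product_union]
    have dfst : ∀ u v : Finset (Finset ℕ),
        Disjoint (((A ×ˢ u).filter fun pp => Crossing pp.1 pp.2))
          (((B ×ˢ v).filter fun pp => Crossing pp.1 pp.2)) := by
      intro u v
      rw [Finset.disjoint_left]
      intro pp h1 h2
      rw [Finset.mem_filter, Finset.mem_product] at h1 h2
      exact Finset.disjoint_left.1 hdisjAB h1.1.1 h2.1.1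
    have dsnd : ∀ s : Finset (Finset ℕ),
        Disjoint (((s ×ˢ A).filter fun pp => Crossing pp.1 pp.2))
          (((s ×ˢ B).filter fun pp => Crossing pp.1 pp.2)) := by
      intro s
      rw [Finset.disjoint_left]
      intro pp h1 h2
      rw [Finset.mem_filter, Finset.mem_product] at h1 h2
      exact Finset.disjoint_left.1 hdisjAB h1.1.2 h2.1.2
    rw [hprod, Finset.filter_union, Finset.filter_union, Finset.filter_union]
    rw [Finset.card_union_of_disjoint, Finset.card_union_of_disjoint (dsnd A),
      Finset.card_union_of_disjoint (dsnd B)]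
    rw [Finset.disjoint_union_left]
    constructor
    · rw [Finset.disjoint_union_right]
      exact ⟨dfst A A, dfst A B⟩
    · rw [Finset.disjoint_union_right]
      exact ⟨dfst B A, dfst B B⟩
  rw [hsplit, hAA, hAB, hBA, hBB]
  simp only [Finset.card_empty, Nat.zero_add]
  -- now the arithmetic
  have hterm : ∀ i : Fin p, (σ₁ i : ℕ) + (i : ℕ) < n 0 := by
    have key : ∀ k : ℕ, ∀ hk : k < p, (σ₁ ⟨k, hk⟩ : ℕ) + k < n 0 := by
      intro k
      induction k with
      | zero => intro hk; simpa using (σ₁ ⟨0, hk⟩).is_lt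
      | succ k ih =>
        intro hk
        have hk' : k < p := by omega
        have h1 := hσ₁ ⟨k, hk'⟩ ⟨k + 1, hk⟩ (Fin.mk_lt_mk.2 (by omega))
        rw [Fin.lt_def] at h1
        have h2 := ih hk'
        show (σ₁ ⟨k + 1, hk⟩ : ℕ) + (k + 1) < n 0
        omega
    intro i
    have := key i.1 i.2
    simpa using this
  have htle : ∀ i : Fin p,
      (Finset.univ.filter fun j => σ₂ j < σ₂ i).card ≤ (σ₂ i : ℕ) := by
    intro i
    have hsub : ((Finset.univ.filter fun j => σ₂ j < σ₂ i).image fun j => (σ₂ j : ℕ)) ⊆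
        Finset.range (σ₂ i : ℕ) := by
      intro a ha
      simp only [Finset.mem_image, Finset.mem_filter] at ha
      obtain ⟨j, ⟨-, hj⟩, rfl⟩ := ha
      rw [Fin.lt_def] at hj
      exact Finset.mem_range.2 hj
    have hcd := Finset.card_le_card hsub
    rwa [Finset.card_image_of_injective _ (fun a b h => hσ₂ (Fin.ext h)),
      Finset.card_range] at hcd
  have hci : ∀ i : Fin p,
      ((Finset.range (n 0 + n 1)).filter fun x =>
        NSpec σ₁ σ₂ x ∧ (σ₁ i : ℕ) < x ∧ x < n 0 + (σ₂ i : ℕ)).card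
      + ((i : ℕ) + (Finset.univ.filter fun j => σ₂ j < σ₂ i).card)
      = (n 0 - (σ₁ i : ℕ) - 1) + (σ₂ i : ℕ) := by
    intro i
    have hi1 := (σ₁ i).is_lt
    have hi2 := (σ₂ i).is_lt
    set Ii := (Finset.range (n 0 + n 1)).filter fun x =>
        NSpec σ₁ σ₂ x ∧ (σ₁ i : ℕ) < x ∧ x < n 0 + (σ₂ i : ℕ) with hIi
    have hsplit2 := Finset.card_filter_add_card_filter_not (s := Ii)
      (fun x => x < n 0)
    have hP1 : Ii.filter (fun x => x < n 0) =
        (Finset.Ioo (σ₁ i : ℕ) (n 0)).filter fun x => ∀ j, (σ₁ j : ℕ) ≠ x := by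
      ext x
      rw [hIi]
      simp only [Finset.mem_filter, Finset.mem_range, Finset.mem_Ioo]
      unfold NSpec
      constructor
      · rintro ⟨⟨hxa, ⟨hs1, hs2⟩, hxb, hxc⟩, hxd⟩
        exact ⟨⟨hxb, hxd⟩, hs1⟩
      · rintro ⟨⟨hxa, hxb⟩, hxc⟩
        have hss : ∀ j, n 0 + (σ₂ j : ℕ) ≠ x := by intro j; omega
        exact ⟨⟨by omega, ⟨hxc, hss⟩, hxa, by omega⟩, hxb⟩
    have hP1card : (Ii.filter (fun x => x < n 0)).card + (i : ℕ)
        = n 0 - (σ₁ i : ℕ) - 1 := by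
      rw [hP1]
      have hc := Finset.card_filter_add_card_filter_not
        (s := Finset.Ioo (σ₁ i : ℕ) (n 0)) (fun x => ∀ j, (σ₁ j : ℕ) ≠ x)
      have himg : (Finset.Ioo (σ₁ i : ℕ) (n 0)).filter (fun x => ¬ ∀ j, (σ₁ j : ℕ) ≠ x) =
          (Finset.univ.filter fun j : Fin p => j < i).image fun j => (σ₁ j : ℕ) := by
        ext x
        simp only [Finset.mem_filter, Finset.mem_Ioo, Finset.mem_image, Finset.mem_univ,
          true_and, not_forall, not_not]
        constructor
        · rintro ⟨⟨hxa, hxb⟩, j, rfl⟩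
          refine ⟨j, ?_, rfl⟩
          rcases lt_trichotomy j i with h | h | h
          · exact h
          · subst h; omega
          · have := hσ₁ i j h; rw [Fin.lt_def] at this; omega
        · rintro ⟨j, hj, rfl⟩
          have hlt := hσ₁ j i hj
          rw [Fin.lt_def] at hlt
          have := (σ₁ j).is_lt
          exact ⟨⟨hlt, this⟩, j, rfl⟩
      have hicard : ((Finset.univ.filter fun j : Fin p => j < i).image
          fun j => (σ₁ j : ℕ)).card = (i : ℕ) := by
        rw [Finset.card_image_of_injective _ (fun a b h => hσ₁inj (Fin.ext h))]
        have hIio : (Finset.univ.filter fun j : Fin p => j < i) = Finset.Iio i := by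
          ext j; simp
        rw [hIio]
        simp
      rw [himg, hicard, Nat.card_Ioo] at hc
      omega
    have hP2 : Ii.filter (fun x => ¬ x < n 0) =
        ((Finset.range (σ₂ i : ℕ)).filter fun k => ∀ j, (σ₂ j : ℕ) ≠ k).image
          fun k => n 0 + k := by
      ext x
      rw [hIi]
      simp only [Finset.mem_filter, Finset.mem_range, Finset.mem_image, not_lt]
      unfold NSpec
      constructor
      · rintro ⟨⟨hxa, ⟨hs1, hs2⟩, hxb, hxc⟩, hxd⟩
        refine ⟨x - n 0, ⟨by omega, ?_⟩, by omega⟩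
        intro j
        have := hs2 j
        omega
      · rintro ⟨k, ⟨hk1, hk2⟩, rfl⟩
        have hsig : ∀ j, (σ₁ j : ℕ) ≠ n 0 + k := by
          intro j; have := (σ₁ j).is_lt; omega
        refine ⟨⟨by omega, ⟨hsig, ?_⟩, by omega, by omega⟩, by omega⟩
        intro j; have := hk2 j; omega
    have hP2card : (Ii.filter (fun x => ¬ x < n 0)).card
        + (Finset.univ.filter fun j => σ₂ j < σ₂ i).card = (σ₂ i : ℕ) := by
      rw [hP2, Finset.card_image_of_injective _ (fun a b h => by omega)]
      have hc := Finset.card_filter_add_card_filter_not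
        (s := Finset.range (σ₂ i : ℕ)) (fun k => ∀ j, (σ₂ j : ℕ) ≠ k)
      have himg : (Finset.range (σ₂ i : ℕ)).filter (fun k => ¬ ∀ j, (σ₂ j : ℕ) ≠ k) =
          (Finset.univ.filter fun j : Fin p => σ₂ j < σ₂ i).image fun j => (σ₂ j : ℕ) := by
        ext k
        simp only [Finset.mem_filter, Finset.mem_range, Finset.mem_image, Finset.mem_univ,
          true_and, not_forall, not_not]
        constructor
        · rintro ⟨hk, j, rfl⟩
          exact ⟨j, by rw [Fin.lt_def]; omega, rfl⟩
        · rintro ⟨j, hj, rfl⟩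
          rw [Fin.lt_def] at hj
          exact ⟨hj, j, rfl⟩
      have hccard : ((Finset.univ.filter fun j : Fin p => σ₂ j < σ₂ i).image
          fun j => (σ₂ j : ℕ)).card
          = (Finset.univ.filter fun j : Fin p => σ₂ j < σ₂ i).card :=
        Finset.card_image_of_injective _ (fun a b h => hσ₂ (Fin.ext h))
      rw [himg, hccard, Finset.card_range] at hc
      omega
    omega
  -- sum of indices
  have hsum_i : (∑ i : Fin p, (i : ℕ)) * 2 = p * (p - 1) := by
    rw [Fin.sum_univ_eq_sum_range (fun i => i) p]
    exact Finset.sum_range_id_mul_two p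
  -- sum of inversion-like counts
  have hsum_t2 : (∑ i : Fin p, (Finset.univ.filter fun j => σ₂ j < σ₂ i).card) * 2
      = p * p - p := by
    set X := (Finset.univ ×ˢ Finset.univ).filter
      (fun ij : Fin p × Fin p => σ₂ ij.2 < σ₂ ij.1) with hX
    have hXc : X.card = ∑ i : Fin p, (Finset.univ.filter fun j => σ₂ j < σ₂ i).card := by
      rw [hX, Finset.card_eq_sum_card_fiberwise (f := Prod.fst) (t := Finset.univ)
        (fun x _ => Finset.mem_univ _)]
      apply Finset.sum_congr rfl
      intro i _
      apply Finset.card_bij (i := fun ij _ => ij.2)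
      · rintro ⟨a, b⟩ hab
        simp only [Finset.mem_filter, Finset.mem_product, Finset.mem_univ, true_and] at hab ⊢
        obtain ⟨hlt, heq⟩ := hab
        subst heq
        exact hlt
      · rintro ⟨a, b⟩ ha ⟨c, d⟩ hc h
        simp only [Finset.mem_filter, Finset.mem_product, Finset.mem_univ, true_and] at ha hc
        dsimp only at h
        rw [Prod.mk.injEq]
        exact ⟨ha.2.trans hc.2.symm, h⟩
      · intro j hj
        simp only [Finset.mem_filter, Finset.mem_univ, true_and] at hj
        refine ⟨(i, j), ?_, rfl⟩
        simp only [Finset.mem_filter, Finset.mem_product, Finset.mem_univ, true_and]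
        exact ⟨hj, trivial⟩

    have hswap : X.card = ((Finset.univ ×ˢ Finset.univ).filter
        (fun ij : Fin p × Fin p => σ₂ ij.1 < σ₂ ij.2)).card := by
      apply Finset.card_bij (i := fun ij _ => (ij.2, ij.1))
      · rintro ⟨a, b⟩ h
        simp only [hX, Finset.mem_filter, Finset.mem_product, Finset.mem_univ, true_and] at h ⊢
        exact h
      · rintro ⟨a, b⟩ - ⟨c, d⟩ - h
        rw [Prod.mk.injEq] at h ⊢
        exact ⟨h.2, h.1⟩
      · rintro ⟨a, b⟩ h
        simp only [Finset.mem_filter, Finset.mem_product, Finset.mem_univ, true_and] at h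
        refine ⟨(b, a), ?_, rfl⟩
        simp only [hX, Finset.mem_filter, Finset.mem_product, Finset.mem_univ, true_and]
        exact h
    have hcompl : (Finset.univ ×ˢ Finset.univ).filter
        (fun ij : Fin p × Fin p => ¬ σ₂ ij.2 < σ₂ ij.1) =
        ((Finset.univ ×ˢ Finset.univ).filter
          (fun ij : Fin p × Fin p => σ₂ ij.1 < σ₂ ij.2)) ∪
        ((Finset.univ ×ˢ Finset.univ).filter
          (fun ij : Fin p × Fin p => ij.1 = ij.2)) := by
      ext ⟨a, b⟩
      simp only [Finset.mem_filter, Finset.mem_product, Finset.mem_union, Finset.mem_univ,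
        true_and]
      constructor
      · intro h
        rcases lt_or_eq_of_le (not_lt.1 h) with h' | h'
        · exact Or.inl h'
        · exact Or.inr (hσ₂ h')
      · rintro (h | h)
        · exact not_lt.2 (le_of_lt h)
        · subst h; exact lt_irrefl _
    have hdiag : ((Finset.univ ×ˢ Finset.univ).filter
        (fun ij : Fin p × Fin p => ij.1 = ij.2)).card = p := by
      have himg : ((Finset.univ ×ˢ Finset.univ).filter
          (fun ij : Fin p × Fin p => ij.1 = ij.2)) =
          Finset.univ.image (fun i : Fin p => (i, i)) := by
        ext ⟨a, b⟩
        simp only [Finset.mem_filter, Finset.mem_product, Finset.mem_image, Finset.mem_univ,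
          true_and]
        constructor
        · intro h
          exact ⟨a, by rw [Prod.mk.injEq]; exact ⟨rfl, h⟩⟩
        · rintro ⟨j, h⟩
          rw [Prod.mk.injEq] at h
          exact h.1.symm.trans h.2
      rw [himg, Finset.card_image_of_injective _
        (fun a b h => by rw [Prod.mk.injEq] at h; exact h.1)]
      simp
    have hdisj2 : Disjoint ((Finset.univ ×ˢ Finset.univ).filter
        (fun ij : Fin p × Fin p => σ₂ ij.1 < σ₂ ij.2))
        ((Finset.univ ×ˢ Finset.univ).filter
        (fun ij : Fin p × Fin p => ij.1 = ij.2)) := by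
      rw [Finset.disjoint_left]
      rintro ⟨a, b⟩ h1 h2
      simp only [Finset.mem_filter] at h1 h2
      have hab : a = b := h2.2
      subst hab
      exact lt_irrefl _ h1.2
    have hpart := Finset.card_filter_add_card_filter_not
      (s := Finset.univ ×ˢ Finset.univ)
      (fun ij : Fin p × Fin p => σ₂ ij.2 < σ₂ ij.1)
    rw [hcompl, Finset.card_union_of_disjoint hdisj2] at hpart
    have huniv : (Finset.univ ×ˢ Finset.univ : Finset (Fin p × Fin p)).card = p * p := by
      simp [Finset.card_product]
    rw [huniv, hdiag] at hpart
    rw [hX] at hXc hswap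
    omega
  have hpp : p * (p - 1) = p * p - p := Nat.mul_pred p p
  have hsum_t : (∑ i : Fin p, (Finset.univ.filter fun j => σ₂ j < σ₂ i).card)
      = ∑ i : Fin p, (i : ℕ) := by omega
  have hD : p * (p - 1) / 2 = ∑ i : Fin p, (i : ℕ) := by
    rw [← hsum_i, Nat.mul_div_cancel _ (by norm_num : (0:ℕ) < 2)]
  have hE : p * (p + 1) / 2 = (∑ i : Fin p, (i : ℕ)) + p := by
    have h3 : p * (p + 1) = p * (p - 1) + 2 * p := by
      cases p with
      | zero => simp
      | succ q => simp only [Nat.succ_sub_one]; ring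
    have h2 : ((∑ i : Fin p, (i : ℕ)) + p) * 2 = p * (p + 1) := by omega
    rw [← h2, Nat.mul_div_cancel _ (by norm_num : (0:ℕ) < 2)]
  have hsum_main : (∑ i : Fin p, ((Finset.range (n 0 + n 1)).filter fun x =>
        NSpec σ₁ σ₂ x ∧ (σ₁ i : ℕ) < x ∧ x < n 0 + (σ₂ i : ℕ)).card)
      + ((∑ i : Fin p, (i : ℕ))
        + (∑ i : Fin p, (Finset.univ.filter fun j => σ₂ j < σ₂ i).card))
      = (∑ i : Fin p, (n 0 - (σ₁ i : ℕ) - 1)) + (∑ i : Fin p, (σ₂ i : ℕ)) := by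
    have := Finset.sum_congr rfl (fun i (_ : i ∈ Finset.univ) => hci i)
    rw [Finset.sum_add_distrib, Finset.sum_add_distrib, Finset.sum_add_distrib] at this
    omega
  have hs1' : (∑ i : Fin p, (n 0 - (σ₁ i : ℕ) - 1)) + p
      = ∑ i : Fin p, (n 0 - (σ₁ i : ℕ)) := by
    have hcg : ∑ i : Fin p, (n 0 - (σ₁ i : ℕ))
        = ∑ i : Fin p, ((n 0 - (σ₁ i : ℕ) - 1) + 1) := by
      apply Finset.sum_congr rfl
      intro i _
      have := hterm i
      omega
    rw [hcg, Finset.sum_add_distrib]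
    simp [Finset.card_univ]
  have hEles1 : (∑ i : Fin p, (i : ℕ)) + p ≤ ∑ i : Fin p, (n 0 - (σ₁ i : ℕ)) := by
    have h1 : ∑ i : Fin p, ((i : ℕ) + 1) ≤ ∑ i : Fin p, (n 0 - (σ₁ i : ℕ)) := by
      apply Finset.sum_le_sum
      intro i _
      have := hterm i
      omega
    rw [Finset.sum_add_distrib] at h1
    simpa [Finset.card_univ] using h1
  have hDles2 : (∑ i : Fin p, (i : ℕ)) ≤ ∑ i : Fin p, (σ₂ i : ℕ) := by
    rw [← hsum_t]
    exact Finset.sum_le_sum (fun i _ => htle i)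
  have halpha : alphaA (n 0) p σ₁
      = (∑ i : Fin p, (n 0 - (σ₁ i : ℕ))) - ((∑ i : Fin p, (i : ℕ)) + p) := by
    unfold alphaA
    rw [hE]
  have hbeta : betaB (n 1) p σ₂
      = ((∑ i : Fin p, (σ₂ i : ℕ)) - (∑ i : Fin p, (i : ℕ))) + invCount σ₂ := by
    unfold betaB
    rw [hD]
  omega
end

section
/- Fix an integer n ≥ 1 and q ∈ (−1,1], and let f ∈ L²(ℝ₊ⁿ) be symmetric. Then Σ_{σ∈S_{2n}, σ({1,…,n})={1,…,n}} q^{inv(σ)} ∫_{P₂(σ)} (f⊗f) ⊗ (f⊗f) = ⟨f,f⟩_q², where P₂(σ), for σ ∈ S_{2n}, is the pairing {{2n+1−i, 2n+σ(i)} : 1≤i≤2n} of {1,…,4n} and (f⊗f)(t₁,…,t_{2n}) := f(t₁,…,tₙ)f(t_{n+1},…,t_{2n}). -/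
open MeasureTheory

/-!
A permutation of `Fin (n + n)` preserving the first block is a block sum `σ₁ ⊕ σ₂`, and
`inv (σ₁ ⊕ σ₂) = inv σ₁ + inv σ₂` since no inversion crosses the blocks. For such a
permutation the pairing `P₂(σ)` joins the first block of each copy of `f ⊗ f` to the second
block of the other copy, so the pairing integral splits as a product of two integrals of the
form `∫ f(t ∘ τ) f(t) dt`. By symmetry of `f` each of these, and each term of `⟨f, f⟩_q`,
equals `∫ f²`.
-/

open MeasureTheory Equiv Finset

section BlockPerm

variable {n m : ℕ}

def blockPerm (σ₁ : Perm (Fin n)) (σ₂ : Perm (Fin m)) : Perm (Fin (n + m)) :=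
  finSumFinEquiv.permCongr (σ₁.sumCongr σ₂)

@[simp]
lemma blockPerm_castAdd (σ₁ : Perm (Fin n)) (σ₂ : Perm (Fin m)) (i : Fin n) :
    blockPerm σ₁ σ₂ (Fin.castAdd m i) = Fin.castAdd m (σ₁ i) := by
  simp [blockPerm, Equiv.permCongr_apply]

@[simp]
lemma blockPerm_natAdd (σ₁ : Perm (Fin n)) (σ₂ : Perm (Fin m)) (j : Fin m) :
    blockPerm σ₁ σ₂ (Fin.natAdd n j) = Fin.natAdd n (σ₂ j) := by
  simp [blockPerm, Equiv.permCongr_apply]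

@[simp]
lemma blockPerm_symm_castAdd (σ₁ : Perm (Fin n)) (σ₂ : Perm (Fin m)) (i : Fin n) :
    (blockPerm σ₁ σ₂).symm (Fin.castAdd m i) = Fin.castAdd m (σ₁.symm i) := by
  rw [Equiv.symm_apply_eq, blockPerm_castAdd, Equiv.apply_symm_apply]

@[simp]
lemma blockPerm_symm_natAdd (σ₁ : Perm (Fin n)) (σ₂ : Perm (Fin m)) (j : Fin m) :
    (blockPerm σ₁ σ₂).symm (Fin.natAdd n j) = Fin.natAdd n (σ₂.symm j) := by
  rw [Equiv.symm_apply_eq, blockPerm_natAdd, Equiv.apply_symm_apply]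

lemma blockPerm_injective :
    Function.Injective fun p : Perm (Fin n) × Perm (Fin m) => blockPerm p.1 p.2 :=
  (finSumFinEquiv.permCongr).injective.comp Perm.sumCongrHom_injective

lemma invCount_blockPerm (σ₁ : Perm (Fin n)) (σ₂ : Perm (Fin m)) :
    invCount (blockPerm σ₁ σ₂) = invCount σ₁ + invCount σ₂ := by
  have hlow : ∀ (i : Fin n) (k : ℕ), ¬ n + k < (i : ℕ) := fun i k => by have := i.isLt; omega
  simp only [invCount, Finset.card_filter, Fintype.sum_prod_type, Fin.sum_univ_add,
    blockPerm_castAdd, blockPerm_natAdd, Fin.lt_def, Fin.val_castAdd, Fin.val_natAdd,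
    Nat.add_lt_add_iff_left, hlow, and_false, false_and, if_false, Finset.sum_const_zero,
    add_zero, zero_add]

lemma image_lowBlock_eq_iff (σ : Perm (Fin (n + m))) :
    (univ.filter fun i : Fin (n + m) => (i : ℕ) < n).image σ =
        univ.filter (fun i : Fin (n + m) => (i : ℕ) < n) ↔
      ∃ p : Perm (Fin n) × Perm (Fin m), blockPerm p.1 p.2 = σ := by
  have hcast : ∀ i : Fin (n + m), (i : ℕ) < n ↔ ∃ j, Fin.castAdd m j = i := fun i =>
    ⟨fun hi => ⟨⟨i, hi⟩, rfl⟩, by rintro ⟨j, rfl⟩; exact j.isLt⟩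
  calc _ ↔ ∀ i : Fin (n + m), (i : ℕ) < n → (σ i : ℕ) < n := by
        refine ⟨fun h i hi => ?_, fun h => ?_⟩
        · have := h ▸ Finset.mem_image_of_mem σ (s := univ.filter fun i : Fin (n + m) =>
            (i : ℕ) < n) (by simpa using hi)
          simpa using this
        · exact Finset.eq_of_subset_of_card_le (by simpa [Finset.image_subset_iff] using h)
            (Finset.card_image_of_injective _ σ.injective).ge
    _ ↔ _ := by
        refine ⟨fun h => ?_, ?_⟩
        · obtain ⟨p, hp⟩ := Perm.mem_sumCongrHom_range_of_perm_mapsTo_inl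
            (σ := finSumFinEquiv.symm.permCongr σ) (by
              rintro _ ⟨j, rfl⟩
              obtain ⟨k, hk⟩ := (hcast _).1 (h (Fin.castAdd m j) j.isLt)
              exact ⟨k, by simp [Equiv.permCongr_apply, ← hk]⟩)
          refine ⟨p, ?_⟩
          change finSumFinEquiv.permCongr (Perm.sumCongrHom _ _ p) = σ
          rw [hp, ← Equiv.permCongr_symm, Equiv.apply_symm_apply]
        · rintro ⟨p, rfl⟩ i hi
          obtain ⟨j, rfl⟩ := (hcast i).1 hi
          simp

lemma sum_perm_preserving_lowBlock {M : Type*} [AddCommMonoid M] (g : Perm (Fin (n + m)) → M) :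
    ∑ σ ∈ univ.filter (fun σ : Perm (Fin (n + m)) =>
        (univ.filter fun i : Fin (n + m) => (i : ℕ) < n).image (fun i => σ i) =
          univ.filter fun i : Fin (n + m) => (i : ℕ) < n), g σ =
      ∑ σ₁, ∑ σ₂, g (blockPerm σ₁ σ₂) := by
  have hfilter : univ.filter (fun σ : Perm (Fin (n + m)) =>
        (univ.filter fun i : Fin (n + m) => (i : ℕ) < n).image (fun i => σ i) =
          univ.filter fun i : Fin (n + m) => (i : ℕ) < n) =
      univ.image fun p : Perm (Fin n) × Perm (Fin m) => blockPerm p.1 p.2 := by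
    ext σ
    simpa using image_lowBlock_eq_iff σ
  rw [hfilter, Finset.sum_image blockPerm_injective.injOn, Fintype.sum_prod_type]

end BlockPerm

section PiFinAdd

variable {α : Type*} [MeasurableSpace α] {n m : ℕ}

variable (α n m) in
def piFinAddEquiv : ((Fin n → α) × (Fin m → α)) ≃ᵐ (Fin (n + m) → α) :=
  (MeasurableEquiv.sumPiEquivProdPi fun _ => α).symm.trans
    (MeasurableEquiv.piCongrLeft (fun _ => α) finSumFinEquiv)

@[simp]
lemma piFinAddEquiv_castAdd (p : (Fin n → α) × (Fin m → α)) (i : Fin n) :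
    piFinAddEquiv α n m p (Fin.castAdd m i) = p.1 i := by
  rw [piFinAddEquiv, MeasurableEquiv.trans_apply, ← finSumFinEquiv_apply_left,
    MeasurableEquiv.piCongrLeft_apply_apply]
  rfl

@[simp]
lemma piFinAddEquiv_natAdd (p : (Fin n → α) × (Fin m → α)) (j : Fin m) :
    piFinAddEquiv α n m p (Fin.natAdd n j) = p.2 j := by
  rw [piFinAddEquiv, MeasurableEquiv.trans_apply, ← finSumFinEquiv_apply_right,
    MeasurableEquiv.piCongrLeft_apply_apply]
  rfl

variable (μ : Measure α) [SigmaFinite μ]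

lemma measurePreserving_piFinAddEquiv :
    MeasurePreserving (piFinAddEquiv α n m)
      ((Measure.pi fun _ => μ).prod (Measure.pi fun _ => μ)) (Measure.pi fun _ => μ) :=
  (measurePreserving_piCongrLeft (fun _ => μ) finSumFinEquiv).comp
    (measurePreserving_sumPiEquivProdPi_symm fun _ => μ)

lemma integral_pi_castAdd_mul_natAdd (g : (Fin n → α) → ℝ) (h : (Fin m → α) → ℝ) :
    ∫ s, g (fun i => s (Fin.castAdd m i)) * h (fun j => s (Fin.natAdd n j))
        ∂Measure.pi (fun _ => μ) =
      (∫ u, g u ∂Measure.pi fun _ => μ) * ∫ v, h v ∂Measure.pi fun _ => μ := by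
  rw [← integral_prod_mul, ← (measurePreserving_piFinAddEquiv μ).integral_comp
    (piFinAddEquiv α n m).measurableEmbedding]
  simp only [piFinAddEquiv_castAdd, piFinAddEquiv_natAdd]

end PiFinAdd

instance inst_s12 : SigmaFinite mR := by unfold mR; infer_instance

section PairingIntegral

variable {n m : ℕ}

lemma gv_castAdd (t : Fin (n + m) → ℝ) (i : Fin n) : gv t i = t (Fin.castAdd m i) :=
  dif_pos _

lemma gv_natAdd (t : Fin (n + m) → ℝ) (j : Fin m) : gv t (n + j) = t (Fin.natAdd n j) :=
  dif_pos _

lemma Fin.rev_castAdd_self (i : Fin n) : Fin.rev (Fin.castAdd n i) = Fin.natAdd n (Fin.rev i) :=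
  Fin.ext (by simp; omega)

lemma Fin.rev_natAdd_self (i : Fin n) : Fin.rev (Fin.natAdd n i) = Fin.castAdd n (Fin.rev i) :=
  Fin.ext (by simp; omega)

lemma integral_comp_perm_mul_of_symmFn {f : (Fin n → ℝ) → ℝ} (hf : SymmFn f)
    (τ : Perm (Fin n)) (g : (Fin n → ℝ) → ℝ) :
    ∫ t, f (fun i => t (τ i)) * g t ∂μn n = ∫ t, f t * g t ∂μn n :=
  integral_congr_ae ((hf τ).mono fun t ht => by simp only [ht])

lemma qInner_of_symmFn {f : (Fin n → ℝ) → ℝ} (hf : SymmFn f) (q : ℝ) (g : (Fin n → ℝ) → ℝ) :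
    qInner n q f g = ∑ τ : Perm (Fin n), q ^ invCount τ * ∫ t, f t * g t ∂μn n := by
  simp only [qInner, integral_comp_perm_mul_of_symmFn hf]

lemma P2Integral_blockPerm (f g : (Fin n → ℝ) → ℝ) (σ₁ σ₂ : Perm (Fin n)) :
    P2Integral (n + n) (blockPerm σ₁ σ₂)
        (fun t => f (fun i => t (Fin.castAdd n i)) * g (fun i => t (Fin.natAdd n i)))
        (fun t => f (fun i => t (Fin.castAdd n i)) * g (fun i => t (Fin.natAdd n i))) =
      (∫ u, g (fun i => u ((σ₂.symm.trans Fin.revPerm) i)) * f u ∂μn n) *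
        ∫ v, f (fun i => v ((σ₁.symm.trans Fin.revPerm) i)) * g v ∂μn n := by
  simp only [P2Integral, μn]
  rw [← integral_pi_castAdd_mul_natAdd]
  congr 1
  funext s
  simp only [blockPerm_symm_castAdd, blockPerm_symm_natAdd, Fin.rev_castAdd_self,
    Fin.rev_natAdd_self, Equiv.trans_apply, Fin.revPerm_apply]
  ring

end PairingIntegral

theorem stmt12_general (n : ℕ) (q : ℝ)
    (f : (Fin n → ℝ) → ℝ) (hsym : SymmFn f) :
    ∑ σ ∈ Finset.univ.filter (fun σ : Equiv.Perm (Fin (2 * n)) =>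
        (Finset.univ.filter fun i : Fin (2 * n) => (i : ℕ) < n).image (fun i => σ i) =
          Finset.univ.filter fun i : Fin (2 * n) => (i : ℕ) < n),
      q ^ invCount (fun i => σ i) *
        P2Integral (2 * n) σ
          (fun t => f (fun i => gv t (i : ℕ)) * f (fun i => gv t (n + (i : ℕ))))
          (fun t => f (fun i => gv t (i : ℕ)) * f (fun i => gv t (n + (i : ℕ)))) =
    (qInner n q f f) ^ 2 := by
  rw [two_mul]
  simp only [gv_castAdd, gv_natAdd]
  rw [sum_perm_preserving_lowBlock, qInner_of_symmFn hsym, sq, Finset.sum_mul_sum]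
  refine Finset.sum_congr rfl fun σ₁ _ => Finset.sum_congr rfl fun σ₂ _ => ?_
  rw [P2Integral_blockPerm, invCount_blockPerm, integral_comp_perm_mul_of_symmFn hsym,
    integral_comp_perm_mul_of_symmFn hsym, pow_add]
  ring

/-- For symmetric `f ∈ L²(ℝ₊ⁿ)` and `q ∈ (-1,1]`:
`Σ_{σ ∈ S_{2n}, σ({1,…,n}) = {1,…,n}} q^{inv σ} ∫_{P₂(σ)} (f⊗f) ⊗ (f⊗f) = ⟨f,f⟩_q²`. -/
theorem stmt12 (n : ℕ) (hn : 1 ≤ n) (q : ℝ) (hq₁ : -1 < q) (hq₂ : q ≤ 1)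
    (f : (Fin n → ℝ) → ℝ) (hf : MemLp f 2 (μn n)) (hsym : SymmFn f) :
    ∑ σ ∈ Finset.univ.filter (fun σ : Equiv.Perm (Fin (2 * n)) =>
        (Finset.univ.filter fun i : Fin (2 * n) => (i : ℕ) < n).image (fun i => σ i) =
          Finset.univ.filter fun i : Fin (2 * n) => (i : ℕ) < n),
      q ^ invCount (fun i => σ i) *
        P2Integral (2 * n) σ
          (fun t => f (fun i => gv t (i : ℕ)) * f (fun i => gv t (n + (i : ℕ))))
          (fun t => f (fun i => gv t (i : ℕ)) * f (fun i => gv t (n + (i : ℕ)))) =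
    (qInner n q f f) ^ 2 :=
  stmt12_general n q f hsym
end

section
/- Let n ≥ 1 be an integer and let ρ : ℤ → ℝ satisfy ρ(−l) = ρ(l) for all l ∈ ℤ and Σ_{l∈ℤ} |ρ(l)|ⁿ < ∞. Then for all reals s,t > 0, lim_{k→∞} (1/k) Σ_{l=0}^{⌊ks⌋} Σ_{m=0}^{⌊kt⌋} ρ(l−m)ⁿ = (Σ_{l∈ℤ} ρ(l)ⁿ) · min(s,t), where the limit is over integers k → ∞. -/
open MeasureTheory

noncomputable section

/-!
Grouping the terms of the double sum by `d = l - m` writes it as `Σ_d N_k(d) ρ(d)ⁿ`, where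
`N_k(d)` is the number of points of the grid `{0,…,⌊ks⌋} × {0,…,⌊kt⌋}` on the diagonal
`l - m = d`. That count lies between `min(⌊ks⌋,⌊kt⌋) + 1 - |d|` and `min(⌊ks⌋,⌊kt⌋) + 1`,
so `N_k(d)/k → min(s,t)` for each `d` while `N_k(d)/k` stays bounded uniformly in `d`; since
`Σ_d |ρ(d)|ⁿ < ∞`, dominated convergence for series (Tannery's theorem) gives the limit.
-/

open Filter Topology Finset

def diagonalPairs (L M : ℕ) (d : ℤ) : Finset (ℕ × ℕ) :=
  {p ∈ range (L + 1) ×ˢ range (M + 1) | (p.1 : ℤ) - p.2 = d}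

lemma card_diagonalPairs_le (L M : ℕ) (d : ℤ) : #(diagonalPairs L M d) ≤ min L M + 1 := by
  have hfst : #(diagonalPairs L M d) ≤ L + 1 := by
    simpa using card_le_card_of_injOn Prod.fst (t := range (L + 1))
      (fun p hp => by simp_all [diagonalPairs])
      (fun p hp q hq h => by simp_all [diagonalPairs]; ext <;> omega)
  have hsnd : #(diagonalPairs L M d) ≤ M + 1 := by
    simpa using card_le_card_of_injOn Prod.snd (t := range (M + 1))
      (fun p hp => by simp_all [diagonalPairs])
      (fun p hp q hq h => by simp_all [diagonalPairs]; ext <;> omega)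
  omega

lemma le_card_diagonalPairs (L M : ℕ) (d : ℤ) :
    min L M + 1 - d.natAbs ≤ #(diagonalPairs L M d) := by
  simpa using card_le_card_of_injOn (fun j : ℕ => (j + d.toNat, j + (-d).toNat))
    (s := range (min L M + 1 - d.natAbs))
    (fun j hj => by simp [diagonalPairs] at hj ⊢; omega)
    (fun i _ j _ h => by simp only [Prod.mk.injEq] at h; omega)

lemma sum_range_sum_range_sub {A : Type*} [AddCommMonoid A] (c : ℤ → A) (L M : ℕ) :
    ∑ l ∈ range (L + 1), ∑ m ∈ range (M + 1), c (l - m) =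
      ∑ d ∈ Icc (-(M : ℤ)) L, #(diagonalPairs L M d) • c d := by
  rw [← sum_product', ← sum_fiberwise_of_maps_to (g := fun p : ℕ × ℕ => (p.1 : ℤ) - p.2)
    (t := Icc (-(M : ℤ)) L) (fun p hp => by simp at hp ⊢; omega)]
  refine sum_congr rfl fun d _ => ?_
  rw [diagonalPairs, ← sum_const]
  exact sum_congr rfl fun p hp => by rw [(mem_filter.1 hp).2]

lemma tsum_card_diagonalPairs_smul {A : Type*} [AddCommMonoid A] [TopologicalSpace A]
    (c : ℤ → A) (L M : ℕ) :
    ∑' d, #(diagonalPairs L M d) • c d =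
      ∑ l ∈ range (L + 1), ∑ m ∈ range (M + 1), c (l - m) := by
  rw [sum_range_sum_range_sub, tsum_eq_sum]
  intro d hd
  rw [card_eq_zero.2, zero_smul]
  refine filter_eq_empty_iff.2 fun p hp => ?_
  simp only [mem_Icc, mem_product, mem_range] at hd hp
  omega

section Limits

variable {L M : ℕ → ℕ} {a b : ℝ}

lemma tendsto_min_add_const_div (hL : Tendsto (fun k => (L k : ℝ) / k) atTop (𝓝 a))
    (hM : Tendsto (fun k => (M k : ℝ) / k) atTop (𝓝 b)) (C : ℝ) :
    Tendsto (fun k => ((↑(min (L k) (M k)) : ℝ) + C) / k) atTop (𝓝 (min a b)) := by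
  have hmin : Tendsto (fun k => (↑(min (L k) (M k)) : ℝ) / k) atTop (𝓝 (min a b)) :=
    (hL.min hM).congr fun k => by rw [Nat.cast_min, min_div_div_right k.cast_nonneg]
  simpa only [add_div, add_zero] using hmin.add (tendsto_const_div_atTop_nhds_zero_nat C)

lemma tendsto_card_diagonalPairs_div (hL : Tendsto (fun k => (L k : ℝ) / k) atTop (𝓝 a))
    (hM : Tendsto (fun k => (M k : ℝ) / k) atTop (𝓝 b)) (d : ℤ) :
    Tendsto (fun k => (#(diagonalPairs (L k) (M k) d) : ℝ) / k) atTop (𝓝 (min a b)) := by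
  refine tendsto_of_tendsto_of_tendsto_of_le_of_le
    (tendsto_min_add_const_div hL hM (1 - d.natAbs)) (tendsto_min_add_const_div hL hM 1)
    (fun k => div_le_div_of_nonneg_right ?_ k.cast_nonneg)
    (fun k => div_le_div_of_nonneg_right ?_ k.cast_nonneg)
  · have h : min (L k) (M k) + 1 ≤ #(diagonalPairs (L k) (M k) d) + d.natAbs := by
      have := le_card_diagonalPairs (L k) (M k) d
      omega
    have := (Nat.cast_le (α := ℝ)).2 h
    push_cast at this ⊢
    linarith
  · have := (Nat.cast_le (α := ℝ)).2 (card_diagonalPairs_le (L k) (M k) d)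
    push_cast at this ⊢
    linarith

theorem tendsto_smul_sum_range_sum_range_sub {E : Type*} [NormedAddCommGroup E]
    [NormedSpace ℝ E] [CompleteSpace E] {c : ℤ → E} (hc : Summable (‖c ·‖))
    (hL : Tendsto (fun k => (L k : ℝ) / k) atTop (𝓝 a))
    (hM : Tendsto (fun k => (M k : ℝ) / k) atTop (𝓝 b)) :
    Tendsto (fun k : ℕ =>
        (1 / (k : ℝ)) • ∑ l ∈ range (L k + 1), ∑ m ∈ range (M k + 1), c (l - m))
      atTop (𝓝 (min a b • ∑' d, c d)) := by
  set f : ℕ → ℤ → E := fun k d => ((#(diagonalPairs (L k) (M k) d) : ℝ) / k) • c d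
  have hf (k : ℕ) :
      (1 / (k : ℝ)) • ∑ l ∈ range (L k + 1), ∑ m ∈ range (M k + 1), c (l - m) =
        ∑' d, f k d := by
    rw [← tsum_card_diagonalPairs_smul, ← tsum_const_smul'']
    refine tsum_congr fun d => ?_
    rw [← Nat.cast_smul_eq_nsmul ℝ, smul_smul, one_div_mul_eq_div]
  have hbound : ∀ᶠ k in atTop, ∀ d, ‖f k d‖ ≤ (min a b + 1) * ‖c d‖ := by
    filter_upwards [(tendsto_min_add_const_div hL hM 1).eventually (gt_mem_nhds (lt_add_one _))]
      with k hk d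
    have hcard : (#(diagonalPairs (L k) (M k) d) : ℝ) ≤ (↑(min (L k) (M k)) : ℝ) + 1 := by
      exact_mod_cast card_diagonalPairs_le (L k) (M k) d
    rw [norm_smul, Real.norm_of_nonneg (by positivity)]
    exact mul_le_mul_of_nonneg_right
      ((div_le_div_of_nonneg_right hcard k.cast_nonneg).trans hk.le) (norm_nonneg _)
  have hlim := tendsto_tsum_of_dominated_convergence (hc.mul_left _)
    (fun d => (tendsto_card_diagonalPairs_div hL hM d).smul_const (c d)) hbound
  rw [tsum_const_smul''] at hlim
  exact hlim.congr fun k => (hf k).symm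

end Limits

theorem stmt17_general (n : ℕ) (ρ : ℤ → ℝ)
    (hsum : Summable fun l : ℤ => |ρ l| ^ n) (s t : ℝ) (hs : 0 < s) (ht : 0 < t) :
    Filter.Tendsto (fun k : ℕ =>
        (1 / (k : ℝ)) *
          ∑ l ∈ Finset.range (⌊(k : ℝ) * s⌋₊ + 1), ∑ m ∈ Finset.range (⌊(k : ℝ) * t⌋₊ + 1),
            ρ ((l : ℤ) - (m : ℤ)) ^ n)
      Filter.atTop (nhds ((∑' l : ℤ, ρ l ^ n) * min s t)) := by
  have hfloor {x : ℝ} (hx : 0 ≤ x) :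
      Tendsto (fun k : ℕ => (⌊(k : ℝ) * x⌋₊ : ℝ) / k) atTop (𝓝 x) := by
    simpa only [mul_comm, Function.comp_def] using
      (tendsto_nat_floor_mul_div_atTop hx).comp tendsto_natCast_atTop_atTop
  have hc : Summable fun l => ‖ρ l ^ n‖ := by simpa only [norm_pow, Real.norm_eq_abs] using hsum
  simpa only [smul_eq_mul, mul_comm (min s t)] using
    tendsto_smul_sum_range_sum_range_sub hc (hfloor hs.le) (hfloor ht.le)

/-- If `ρ` is even with `Σ_{l∈ℤ} |ρ(l)|ⁿ < ∞` then for `s,t > 0`,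
`(1/k) Σ_{l=0}^{⌊ks⌋} Σ_{m=0}^{⌊kt⌋} ρ(l-m)ⁿ → (Σ_{l∈ℤ} ρ(l)ⁿ) · min(s,t)` as `k → ∞`. -/
theorem stmt17 (n : ℕ) (hn : 1 ≤ n) (ρ : ℤ → ℝ) (hsymm : ∀ l : ℤ, ρ (-l) = ρ l)
    (hsum : Summable fun l : ℤ => |ρ l| ^ n) (s t : ℝ) (hs : 0 < s) (ht : 0 < t) :
    Filter.Tendsto (fun k : ℕ =>
        (1 / (k : ℝ)) *
          ∑ l ∈ Finset.range (⌊(k : ℝ) * s⌋₊ + 1), ∑ m ∈ Finset.range (⌊(k : ℝ) * t⌋₊ + 1),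
            ρ ((l : ℤ) - (m : ℤ)) ^ n)
      Filter.atTop (nhds ((∑' l : ℤ, ρ l ^ n) * min s t)) :=
  stmt17_general n ρ hsum s t hs ht
end
end
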